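/- arXiv:2401.05652 — 10 statements merged into one kernel-verified Lean document; each statement's English description precedes it below -/
import Mathlib

section
/- Under the stated flatness and periodicity assumptions, if s ∈ k^n has all its coordinates in the prime field F_p (equivalently s_j^p = s_j for all j), then every p-curvature matrix C_i(s) ∈ Mat_N(k[x_1,…,x_r]) is nilpotent. -/
open MvPolynomial Matrix

/-- The connection operator `∇_i(s)` of the pencil with coefficient matrices `B`,
acting on `N`-tuples of polynomials with coefficients in a commutative `k`-algebra `S`:
`∇_i(s) v = ∂_i v − (Σ_j s_j • B_{ij}) · v`. -/
noncomputable def connOp {k : Type} [CommRing k] {N r n : ℕ}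
    (B : Fin r → Fin n → Matrix (Fin N) (Fin N) (MvPolynomial (Fin r) k))
    (S : Type) [CommRing S] [Algebra k S] (s : Fin n → S) (i : Fin r)
    (v : Fin N → MvPolynomial (Fin r) S) : Fin N → MvPolynomial (Fin r) S :=
  fun a => pderiv i (v a) -
    ((∑ j, (MvPolynomial.C (s j) : MvPolynomial (Fin r) S) • (B i j).map (MvPolynomial.map (algebraMap k S))) *ᵥ v) a

/-!
In characteristic `p` the commutator with `∇_i(s)` acts on multiplication operators as `∂_i`
and `(ad ∇)^p = ad (∇^p)`; since `∂_i^p = 0`, the operator `∇_i(s)^p` is `S[x]`-linear, i.e. a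
matrix, compatible with base change. For the universal pencil over `k[s_1,…,s_n]`, the shift
operators `A_j` over `k(s)` conjugate the `p`-curvature at `σ + e_j` to the one at `σ`, so the
characteristic polynomial of the universal `p`-curvature is invariant under `s_j ↦ s_j + 1`.
Specialising, `t ↦ charpoly C_i(t)` is `ℤ^n`-periodic on `k^n`. A point with `s_j^p = s_j`
lies in `𝔽_p^n`, the image of `ℤ^n`, so `charpoly C_i(s) = charpoly C_i(0) = X^N` because
`C_i(0) = ∂_i^p = 0`; Cayley–Hamilton then makes `C_i(s)` nilpotent.
-/

section CharP

variable {p : ℕ} [Fact p.Prime]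

theorem Commute.sub_pow_prime_of_natCast_eq_zero {A : Type*} [Ring A] (hp : (p : A) = 0)
    {x y : A} (h : Commute x y) : (x - y) ^ p = x ^ p - y ^ p := by
  cases subsingleton_or_nontrivial A
  · exact Subsingleton.elim _ _
  · have := (CharP.charP_iff_prime_eq_zero Fact.out).2 hp
    exact sub_pow_char_of_commute p h

theorem iterate_commutator_prime {A : Type*} [Ring A] (hp : (p : A) = 0) (a b : A) :
    (fun x => a * x - x * a)^[p] b = a ^ p * b - b * a ^ p := by
  have hpEnd : (p : Module.End ℤ A) = 0 := by
    ext x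
    simp [Module.End.natCast_apply, nsmul_eq_mul, hp]
  have hcoe : (fun x => a * x - x * a) = ⇑(LinearMap.mulLeft ℤ a - LinearMap.mulRight ℤ a) :=
    rfl
  rw [hcoe, ← Module.End.coe_pow, Commute.sub_pow_prime_of_natCast_eq_zero hpEnd
    (LinearMap.commute_mulLeft_right a a), LinearMap.pow_mulLeft, LinearMap.pow_mulRight]
  rfl

theorem iterate_prime_smul_of_leibniz {R M : Type*} [CommRing R] [AddCommGroup M]
    [Module R M] (hp : (p : R) = 0) (D : R → R) (L : M →+ M)
    (hL : ∀ (f : R) (v : M), L (f • v) = f • L v + D f • v) (f : R) (v : M) :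
    L^[p] (f • v) = f • L^[p] v + D^[p] f • v := by
  let E : AddMonoid.End M := L
  let μ := DistribMulAction.toAddMonoidEnd R M
  have hpEnd : (p : AddMonoid.End M) = 0 := by
    ext v
    rw [AddMonoid.End.natCast_apply, ← Nat.cast_smul_eq_nsmul R, hp, zero_smul]
    rfl
  have hcomm : ∀ g, E * μ g - μ g * E = μ (D g) := fun g => by
    ext v
    change L (g • v) - g • L v = D g • v
    rw [hL, add_sub_cancel_left]
  have hiter : ∀ m, (fun x => E * x - x * E)^[m] (μ f) = μ (D^[m] f) := by
    intro m
    induction m with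
    | zero => rfl
    | succ m ih => rw [Function.iterate_succ_apply', ih, hcomm, Function.iterate_succ_apply']
  have h : (E ^ p) (f • v) - f • (E ^ p) v = D^[p] f • v := by
    change (E ^ p * μ f - μ f * E ^ p) v = μ (D^[p] f) v
    rw [← iterate_commutator_prime hpEnd, hiter p]
  rwa [AddMonoid.End.coe_pow, sub_eq_iff_eq_add'] at h

end CharP

theorem MvPolynomial.pderiv_iterate_prime {σ S : Type*} [CommRing S] {p : ℕ} [Fact p.Prime]
    (hp : (p : S) = 0) (i : σ) (f : MvPolynomial σ S) : (pderiv i)^[p] f = 0 := by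
  -- `∂^p` is again a derivation, and it kills constants and variables.
  obtain ⟨q, hq⟩ := Nat.exists_eq_add_of_le' (Fact.out : p.Prime).two_le
  induction f using MvPolynomial.induction_on with
  | C a => rw [hq, Function.iterate_succ_apply, Function.iterate_succ_apply]; simp
  | add f g hf hg => rw [iterate_map_add, hf, hg, add_zero]
  | mul_X f l hf =>
    have hX : (pderiv i)^[p] (X l : MvPolynomial σ S) = 0 := by
      classical
      rw [hq, Function.iterate_succ_apply, Function.iterate_succ_apply, pderiv_X]
      by_cases h : i = l <;> simp [h]
    have hpR : (p : MvPolynomial σ S) = 0 := by rw [← map_natCast C, hp, map_zero]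
    have h := iterate_prime_smul_of_leibniz hpR (pderiv i) (pderiv (R := S) i).toAddMonoidHom
      (fun f v => by simp [smul_eq_mul, mul_comm]) f (X l)
    simpa [hX, hf] using h

theorem MvPolynomial.map_comp_map {σ R S₁ S₂ : Type*} [CommSemiring R] [CommSemiring S₁]
    [CommSemiring S₂] (f : R →+* S₁) (g : S₁ →+* S₂) :
    (map g).comp (map f) = (map (g.comp f) : MvPolynomial σ R →+* MvPolynomial σ S₂) :=
  RingHom.ext (map_map f g)

theorem periodic_intCast_of_forall_periodic_single {ι R β : Type*} [Fintype ι] [DecidableEq ι]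
    [AddCommGroupWithOne R] {g : (ι → R) → β} (h : ∀ j, Function.Periodic g (Pi.single j 1))
    (z : ι → ℤ) : Function.Periodic g (fun j => (z j : R)) := by
  rw [← Finset.univ_sum_single (fun j => (z j : R))]
  refine Finset.sum_induction _ (Function.Periodic g) (fun _ _ => Function.Periodic.add_period)
    (fun _ => by simp) fun j _ => ?_
  rw [← zsmul_one, Pi.single_smul']
  exact (h j).zsmul (z j)

section Connection

variable {k : Type} [CommRing k] {N r n : ℕ}
  (B : Fin r → Fin n → Matrix (Fin N) (Fin N) (MvPolynomial (Fin r) k))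
  (S : Type) [CommRing S] [Algebra k S] (s : Fin n → S) (i : Fin r)

theorem connOp_add (v w : Fin N → MvPolynomial (Fin r) S) :
    connOp B S s i (v + w) = connOp B S s i v + connOp B S s i w := by
  ext1 a
  simp only [connOp, Pi.add_apply, map_add, mulVec_add]
  ring

theorem connOp_smul (f : MvPolynomial (Fin r) S) (v : Fin N → MvPolynomial (Fin r) S) :
    connOp B S s i (f • v) = f • connOp B S s i v + pderiv i f • v := by
  ext1 a
  simp only [connOp, Pi.add_apply, Pi.smul_apply, mulVec_smul, smul_eq_mul, Derivation.leibniz]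
  ring

theorem connOp_iterate_prime_smul {p : ℕ} [Fact p.Prime] (hp : (p : S) = 0)
    (f : MvPolynomial (Fin r) S) (v : Fin N → MvPolynomial (Fin r) S) :
    (connOp B S s i)^[p] (f • v) = f • (connOp B S s i)^[p] v := by
  have hpR : (p : MvPolynomial (Fin r) S) = 0 := by rw [← map_natCast C, hp, map_zero]
  have h := iterate_prime_smul_of_leibniz hpR (pderiv i)
    (AddMonoidHom.mk' _ (connOp_add B S s i)) (connOp_smul B S s i) f v
  rwa [pderiv_iterate_prime hp, zero_smul, add_zero] at h

/-- Only meaningful when `p = 0` in `S`: then `∇_i(s)^p` is `S[x]`-linear and this is its matrix. -/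
noncomputable def pCurvature (p : ℕ) : Matrix (Fin N) (Fin N) (MvPolynomial (Fin r) S) :=
  Matrix.of fun a b => (connOp B S s i)^[p] (Pi.single b 1) a

theorem connOp_iterate_prime_eq_mulVec {p : ℕ} [Fact p.Prime] (hp : (p : S) = 0)
    (v : Fin N → MvPolynomial (Fin r) S) :
    (connOp B S s i)^[p] v = pCurvature B S s i p *ᵥ v := by
  let Φ : (Fin N → MvPolynomial (Fin r) S) →ₗ[MvPolynomial (Fin r) S] _ :=
    { toFun := (connOp B S s i)^[p]
      map_add' := iterate_map_add (AddMonoidHom.mk' _ (connOp_add B S s i)) p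
      map_smul' := connOp_iterate_prime_smul B S s i hp }
  have hΦ : pCurvature B S s i p = LinearMap.toMatrix' Φ := by
    ext a b : 1
    rfl
  rw [hΦ, LinearMap.toMatrix'_mulVec]
  rfl

theorem pCurvature_zero {p : ℕ} [Fact p.Prime] (hp : (p : S) = 0) :
    pCurvature B S 0 i p = 0 := by
  have hderiv : ∀ a, Function.Semiconj (fun v : Fin N → MvPolynomial (Fin r) S => v a)
      (connOp B S 0 i) (pderiv i) := fun a v => by
    simp [connOp]
  ext a b : 1
  exact ((hderiv a).iterate_right p (Pi.single b 1)).trans (pderiv_iterate_prime hp i _)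

theorem charpoly_pCurvature_eq_of_semiconj {p : ℕ} [Fact p.Prime] (hp : (p : S) = 0)
    {s' : Fin n → S} {A : Matrix (Fin N) (Fin N) (MvPolynomial (Fin r) S)} (hA : IsUnit A)
    (hconj : Function.Semiconj (A *ᵥ ·) (connOp B S s i) (connOp B S s' i)) :
    (pCurvature B S s' i p).charpoly = (pCurvature B S s i p).charpoly := by
  obtain ⟨u, rfl⟩ := hA
  have hmul : pCurvature B S s' i p * u = u * pCurvature B S s i p := by
    refine ext_iff_mulVec.2 fun v => ?_
    rw [← mulVec_mulVec, ← mulVec_mulVec, ← connOp_iterate_prime_eq_mulVec B S s' i hp,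
      ← connOp_iterate_prime_eq_mulVec B S s i hp]
    exact (hconj.iterate_right p v).symm
  rw [(Units.eq_mul_inv_iff_mul_eq u).2 hmul, coe_units_inv, charpoly_units_conj]

section BaseChange

variable {S} {T : Type} [CommRing T] [Algebra k T] (φ : S →ₐ[k] T)

theorem semiconj_map_connOp :
    Function.Semiconj (fun v : Fin N → MvPolynomial (Fin r) S => MvPolynomial.map φ ∘ v)
      (connOp B S s i) (connOp B T (φ ∘ s) i) := fun v => by
  ext1 a
  simp only [connOp, Function.comp_apply, map_sub, pderiv_map, RingHom.map_mulVec]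
  congr 3
  ext a b : 1
  simp [Matrix.sum_apply, MvPolynomial.map_map]

theorem pCurvature_map (p : ℕ) :
    (pCurvature B S s i p).map (MvPolynomial.map (φ : S →+* T))
      = pCurvature B T (φ ∘ s) i p := by
  ext a b : 1
  have h := congrFun ((semiconj_map_connOp B s i φ).iterate_right p (Pi.single b 1)) a
  have hsingle :
      MvPolynomial.map (σ := Fin r) (φ : S →+* T) ∘ Pi.single b 1 = Pi.single b 1 := by
    ext1 c
    rcases eq_or_ne c b with rfl | hc <;> simp [*]
  rw [hsingle] at h
  exact h

end BaseChange

end Connection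

noncomputable def paramShift (k : Type) [CommRing k] {n : ℕ} (j : Fin n) :
    MvPolynomial (Fin n) k →ₐ[k] MvPolynomial (Fin n) k :=
  aeval (X + Pi.single j 1)

section Universal

variable {k : Type} [CommRing k] {N r n : ℕ}
  (B : Fin r → Fin n → Matrix (Fin N) (Fin N) (MvPolynomial (Fin r) k)) (i : Fin r) {p : ℕ}

theorem charpoly_pCurvature_comp_X {T : Type} [CommRing T] [Algebra k T]
    (φ : MvPolynomial (Fin n) k →ₐ[k] T) :
    (pCurvature B T (φ ∘ X) i p).charpoly
      = (pCurvature B (MvPolynomial (Fin n) k) X i p).charpoly.map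
          (MvPolynomial.map (φ : MvPolynomial (Fin n) k →+* T)) := by
  rw [← pCurvature_map, charpoly_map]

theorem periodic_charpoly_pCurvature (j : Fin n)
    (hshift : (pCurvature B (MvPolynomial (Fin n) k) X i p).charpoly.map
        (MvPolynomial.map (paramShift k j))
      = (pCurvature B (MvPolynomial (Fin n) k) X i p).charpoly) :
    Function.Periodic (fun t : Fin n → k => (pCurvature B k t i p).charpoly) (Pi.single j 1) := by
  intro t
  have heval : ∀ t : Fin n → k, aeval t ∘ (X : Fin n → MvPolynomial (Fin n) k) = t :=
    fun t => funext fun j => aeval_X t j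
  have hcomp : ((aeval t).comp (paramShift k j)) ∘ X = t + Pi.single j 1 := by
    ext1 j'
    rcases eq_or_ne j' j with rfl | h
    · simp [paramShift]
    · simp [paramShift, Pi.single_eq_of_ne h]
  have h := congrArg
    (Polynomial.map (MvPolynomial.map (σ := Fin r)
      ((aeval t : MvPolynomial (Fin n) k →ₐ[k] k) : MvPolynomial (Fin n) k →+* k))) hshift
  rwa [Polynomial.map_map, MvPolynomial.map_comp_map, ← AlgHom.comp_toRingHom,
    ← charpoly_pCurvature_comp_X, ← charpoly_pCurvature_comp_X, hcomp, heval] at h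

variable [Fact p.Prime]

theorem charpoly_pCurvature_X_map_shift {T : Type} [CommRing T] [Algebra k T] (hp : (p : T) = 0)
    (φ : MvPolynomial (Fin n) k →ₐ[k] T) (hφ : Function.Injective φ) (j : Fin n)
    {A : Matrix (Fin N) (Fin N) (MvPolynomial (Fin r) T)} (hA : IsUnit A)
    (hconj : Function.Semiconj (A *ᵥ ·) (connOp B T (φ ∘ X) i)
      (connOp B T (φ ∘ X + Pi.single j 1) i)) :
    (pCurvature B (MvPolynomial (Fin n) k) X i p).charpoly.map
        (MvPolynomial.map (paramShift k j))
      = (pCurvature B (MvPolynomial (Fin n) k) X i p).charpoly := by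
  refine Polynomial.map_injective _
    (MvPolynomial.map_injective (φ : MvPolynomial (Fin n) k →+* T) hφ) ?_
  have hshift : (φ.comp (paramShift k j)) ∘ X = φ ∘ X + Pi.single j 1 := by
    ext1 j'
    rcases eq_or_ne j' j with rfl | h
    · simp [paramShift]
    · simp [paramShift, Pi.single_eq_of_ne h]
  calc _ = (pCurvature B (MvPolynomial (Fin n) k) X i p).charpoly.map
        (MvPolynomial.map (φ.comp (paramShift k j))) := by
        rw [Polynomial.map_map, MvPolynomial.map_comp_map, AlgHom.comp_toRingHom]
    _ = _ := by
        rw [← charpoly_pCurvature_comp_X, ← charpoly_pCurvature_comp_X, hshift]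
        exact charpoly_pCurvature_eq_of_semiconj B T _ i hp hA hconj

end Universal

theorem pcurvature_nilpotent_of_periodic_pencil_general
    {p : ℕ} [Fact p.Prime] {k : Type} [Field k] [CharP k p]
    {N r n : ℕ}
    (B : Fin r → Fin n → Matrix (Fin N) (Fin N) (MvPolynomial (Fin r) k))
    -- `F = k(s_1,…,s_n)`, the rational function field, with `σ` the tuple of variables
    (F : Type) [Field F] [Algebra k F]
    [Algebra (MvPolynomial (Fin n) k) F] [IsScalarTower k (MvPolynomial (Fin n) k) F]
    [IsFractionRing (MvPolynomial (Fin n) k) F]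
    (σ : Fin n → F) (hσ : ∀ j, σ j = algebraMap (MvPolynomial (Fin n) k) F (X j))
    -- periodicity: shift operators
    (hper : ∀ j : Fin n, ∃ A : Matrix (Fin N) (Fin N) (MvPolynomial (Fin r) F),
      IsUnit A ∧ ∀ (i : Fin r) (v : Fin N → MvPolynomial (Fin r) F),
        connOp B F (fun j' => σ j' + if j' = j then 1 else 0) i (A *ᵥ v)
          = A *ᵥ connOp B F σ i v)
    -- the p-curvature matrices
    (Cmat : (Fin n → k) → Fin r → Matrix (Fin N) (Fin N) (MvPolynomial (Fin r) k))
    (hC : ∀ (s : Fin n → k) (i : Fin r) (v : Fin N → MvPolynomial (Fin r) k),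
      (connOp B k s i)^[p] v = Cmat s i *ᵥ v)
    (s : Fin n → k) (hs : ∀ j, s j ^ p = s j) (i : Fin r) :
    IsNilpotent (Cmat s i) := by
  have hp (S : Type) [CommRing S] [Algebra k S] : (p : S) = 0 := by
    rw [← map_natCast (algebraMap k S), CharP.cast_eq_zero, map_zero]
  have hCmat : Cmat s i = pCurvature B k s i p :=
    ext_iff_mulVec.2 fun v => by rw [← hC, connOp_iterate_prime_eq_mulVec B k s i (hp k)]
  have hperiodic (j : Fin n) :
      Function.Periodic (fun t => (pCurvature B k t i p).charpoly) (Pi.single j 1) := by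
    obtain ⟨A, hA, hAσ⟩ := hper j
    let φ := IsScalarTower.toAlgHom k (MvPolynomial (Fin n) k) F
    have hφσ : φ ∘ X = σ := funext fun j => (hσ j).symm
    have hσj : (fun j' => σ j' + if j' = j then 1 else 0) = σ + Pi.single j 1 := by
      ext1 j'
      simp [Pi.single_apply]
    refine periodic_charpoly_pCurvature B i j (charpoly_pCurvature_X_map_shift B i (hp F) φ
      (IsFractionRing.injective _ F) j hA ?_)
    rw [hφσ, ← hσj]
    exact fun v => (hAσ i v).symm
  obtain ⟨z, hz⟩ : ∃ z : Fin n → ℤ, (fun j => (z j : k)) = s := by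
    choose z hz using fun j =>
      (mem_bot_iff_intCast p k).1 ((Subfield.mem_bot_iff_pow_eq_self k p).2 (hs j))
    exact ⟨z, funext hz⟩
  have hcharpoly : (Cmat s i).charpoly = Polynomial.X ^ Fintype.card (Fin N) := by
    rw [hCmat, ← hz]
    refine (periodic_intCast_of_forall_periodic_single hperiodic z).eq.trans ?_
    rw [pCurvature_zero B k i (hp k), charpoly_zero]
  exact ⟨_, by simpa [hcharpoly] using aeval_self_charpoly (Cmat s i)⟩

/-- If all coordinates of `s` lie in the prime field `F_p` (i.e. `s_j^p = s_j`), then the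
`p`-curvature matrices `C_i(s)` of a periodic pencil of flat connections are nilpotent. -/
theorem pcurvature_nilpotent_of_periodic_pencil
    {p : ℕ} [Fact p.Prime] {k : Type} [Field k] [IsAlgClosed k] [CharP k p]
    {N r n : ℕ} (hr : 1 ≤ r) (hn : 1 ≤ n)
    (B : Fin r → Fin n → Matrix (Fin N) (Fin N) (MvPolynomial (Fin r) k))
    -- `F = k(s_1,…,s_n)`, the rational function field, with `σ` the tuple of variables
    (F : Type) [Field F] [Algebra k F]
    [Algebra (MvPolynomial (Fin n) k) F] [IsScalarTower k (MvPolynomial (Fin n) k) F]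
    [IsFractionRing (MvPolynomial (Fin n) k) F]
    (σ : Fin n → F) (hσ : ∀ j, σ j = algebraMap (MvPolynomial (Fin n) k) F (X j))
    -- flatness
    (hflat : ∀ (i l : Fin r) (v : Fin N → MvPolynomial (Fin r) F),
      connOp B F σ i (connOp B F σ l v) = connOp B F σ l (connOp B F σ i v))
    -- periodicity: shift operators
    (hper : ∀ j : Fin n, ∃ A : Matrix (Fin N) (Fin N) (MvPolynomial (Fin r) F),
      IsUnit A ∧ ∀ (i : Fin r) (v : Fin N → MvPolynomial (Fin r) F),
        connOp B F (fun j' => σ j' + if j' = j then 1 else 0) i (A *ᵥ v)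
          = A *ᵥ connOp B F σ i v)
    -- the p-curvature matrices
    (Cmat : (Fin n → k) → Fin r → Matrix (Fin N) (Fin N) (MvPolynomial (Fin r) k))
    (hC : ∀ (s : Fin n → k) (i : Fin r) (v : Fin N → MvPolynomial (Fin r) k),
      (connOp B k s i)^[p] v = Cmat s i *ᵥ v)
    (s : Fin n → k) (hs : ∀ j, s j ^ p = s j) (i : Fin r) :
    IsNilpotent (Cmat s i) :=
  pcurvature_nilpotent_of_periodic_pencil_general B F σ hσ hper Cmat hC s hs i
end

section
/- Let L, M : Fin r → Mat_N(k) be two pencils of commuting endomorphisms of the same size N. Assume that for every u ∈ k^r the characteristic polynomials of Σ_i u_i · L_i and Σ_i u_i · M_i coincide, and that for some u₀ ∈ k^r the characteristic polynomial of Σ_i (u₀)_i · L_i is separable (has N distinct roots), i.e., the pencil L has simple spectrum. Then the pencils are conjugate: there exists an invertible matrix P ∈ GL_N(k) with P · L_i · P⁻¹ = M_i for every i ∈ Fin r. -/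
/-!
The generic member `A = ∑ u₀ᵢ • Lᵢ` has `N` distinct eigenvalues, so an eigenbasis of `A`
diagonalises it, and every matrix commuting with `A` is diagonal in that basis. Since
`∑ u₀ᵢ • Mᵢ` has the same characteristic polynomial, both pencils become diagonal pencils,
with joint eigenvalues `c, d : Fin r → Fin N → k` indexed compatibly through the eigenvalues
of `A`. Then `∏ⱼ (X - ∑ᵢ uᵢ cᵢⱼ) = ∏ⱼ (X - ∑ᵢ uᵢ dᵢⱼ)` for every `u`; restricting `u` to the
lines `u₀ + t • eᵢ` over the infinite field `k` matches the linear forms one by one, so `c = d`.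
-/

open Matrix Polynomial

namespace Matrix

variable {k n ι : Type*} [Field k] [Fintype n] [DecidableEq n]

theorem exists_injective_charpoly_eq_prod_of_separable {A : Matrix n n k}
    (hsplit : A.charpoly.Splits) (hsep : A.charpoly.Separable) :
    ∃ lam : n → k, Function.Injective lam ∧ A.charpoly = ∏ j, (X - C (lam j)) := by
  classical
  have hnodup : A.charpoly.roots.Nodup := nodup_roots hsep
  have hcard : Fintype.card n = Fintype.card A.charpoly.roots.toFinset := by
    rw [Fintype.card_coe, Multiset.toFinset_card_of_nodup hnodup,
      ← hsplit.natDegree_eq_card_roots, charpoly_natDegree_eq_dim]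
  let e := Fintype.equivOfCardEq hcard
  refine ⟨fun j => e j, Subtype.val_injective.comp e.injective, ?_⟩
  conv_lhs => rw [hsplit.eq_prod_roots_of_monic (charpoly_monic A)]
  rw [e.prod_comp (fun a => X - C (a : k)),
    Finset.prod_coe_sort A.charpoly.roots.toFinset (fun a => X - C a),
    Finset.prod_eq_multiset_prod, Multiset.toFinset_val, hnodup.dedup]

theorem exists_mulVec_eq_smul_of_isRoot_charpoly {A : Matrix n n k} {μ : k}
    (h : A.charpoly.IsRoot μ) : ∃ v, v ≠ 0 ∧ A *ᵥ v = μ • v := by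
  rw [← charpoly_toLin', ← Module.End.hasEigenvalue_iff_isRoot_charpoly] at h
  obtain ⟨v, hv⟩ := h.exists_hasEigenvector
  exact ⟨v, hv.2, by simpa using Module.End.mem_eigenspace_iff.mp hv.1⟩

theorem exists_isUnit_inv_mul_mul_eq_diagonal {A : Matrix n n k} {lam : n → k}
    (hlam : Function.Injective lam) (hA : A.charpoly = ∏ j, (X - C (lam j))) :
    ∃ V : Matrix n n k, IsUnit V ∧ V⁻¹ * A * V = diagonal lam := by
  have hroot : ∀ j, A.charpoly.IsRoot (lam j) := fun j => by
    simp [hA, eval_prod, Finset.prod_eq_zero_iff, sub_eq_zero]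
  choose v hv0 hv using fun j => exists_mulVec_eq_smul_of_isRoot_charpoly (hroot j)
  have hli : LinearIndependent k v :=
    Module.End.eigenvectors_linearIndependent' A.toLin' lam hlam v fun j =>
      ⟨Module.End.mem_eigenspace_iff.mpr (by simpa using hv j), hv0 j⟩
  let V : Matrix n n k := (Matrix.of v)ᵀ
  have hV : IsUnit V := linearIndependent_cols_iff_isUnit.mp hli
  have hAV : A * V = V * diagonal lam := by
    ext p q
    rw [mul_diagonal]
    simpa [V, mul_apply, mulVec, dotProduct, mul_comm] using congrFun (hv q) p
  refine ⟨V, hV, ?_⟩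
  rw [mul_assoc, hAV, ← mul_assoc, nonsing_inv_mul _ ((isUnit_iff_isUnit_det V).mp hV), one_mul]

theorem eq_diagonal_of_commute_diagonal {B : Matrix n n k} {d : n → k}
    (hd : Function.Injective d) (h : Commute B (diagonal d)) :
    B = diagonal fun i => B i i := by
  ext p q
  obtain rfl | hpq := eq_or_ne p q
  · simp
  have hBpq : (d q - d p) * B p q = 0 := by
    have := congrFun (congrFun h.eq p) q
    rw [mul_diagonal, diagonal_mul] at this
    linear_combination this
  rw [diagonal_apply_ne _ hpq]
  exact (mul_eq_zero.mp hBpq).resolve_left (sub_ne_zero.mpr (hd.ne hpq.symm))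

theorem exists_inv_mul_mul_eq_diagonal_of_commute {A V : Matrix n n k} {lam : n → k}
    (hV : IsUnit V) (hlam : Function.Injective lam) (hA : V⁻¹ * A * V = diagonal lam)
    {L : ι → Matrix n n k} (hL : ∀ i, Commute (L i) A) :
    ∃ c : ι → n → k, ∀ i, V⁻¹ * L i * V = diagonal (c i) := by
  have hVV : V * V⁻¹ = 1 := mul_nonsing_inv V ((isUnit_iff_isUnit_det V).mp hV)
  have hconj : ∀ i, Commute (V⁻¹ * L i * V) (diagonal lam) := fun i => by
    rw [← hA, Commute, SemiconjBy]
    simp only [mul_assoc, ← mul_assoc V, hVV, one_mul]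
    rw [← mul_assoc (L i), (hL i).eq, mul_assoc]
  exact ⟨fun i j => (V⁻¹ * L i * V) j j,
    fun i => eq_diagonal_of_commute_diagonal hlam (hconj i)⟩

theorem inv_mul_sum_smul_mul_eq_diagonal [Fintype ι] {L : ι → Matrix n n k}
    {V : Matrix n n k} {c : ι → n → k} (hc : ∀ i, V⁻¹ * L i * V = diagonal (c i))
    (u : ι → k) : V⁻¹ * (∑ i, u i • L i) * V = diagonal (∑ i, u i • c i) := by
  simp_rw [Finset.mul_sum, Finset.sum_mul, Matrix.mul_smul, Matrix.smul_mul, hc, ← diagonal_smul]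
  exact (map_sum (diagonalAddMonoidHom n k) _ _).symm

theorem charpoly_sum_smul_eq_prod [Fintype ι] {L : ι → Matrix n n k} {V : Matrix n n k}
    (hV : IsUnit V) {c : ι → n → k} (hc : ∀ i, V⁻¹ * L i * V = diagonal (c i))
    (u : ι → k) : (∑ i, u i • L i).charpoly = ∏ j, (X - C ((∑ i, u i • c i) j)) := by
  rw [← charpoly_units_conj' hV.unit, IsUnit.unit_spec, inv_mul_sum_smul_mul_eq_diagonal hc,
    charpoly_diagonal]

end Matrix

namespace Polynomial

variable {k n ι : Type*} [Field k] [Fintype n]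

theorem exists_eq_of_prod_X_sub_C_eq {a b : n → k}
    (h : ∏ j, (X - C (a j)) = ∏ j, (X - C (b j))) (j : n) : ∃ j', a j = b j' := by
  have hroot : (∏ j', (X - C (b j'))).IsRoot (a j) := by
    simp [← h, eval_prod, Finset.prod_eq_zero_iff, sub_eq_zero]
  simpa [eval_prod, Finset.prod_eq_zero_iff, sub_eq_zero] using hroot

theorem eq_of_forall_prod_X_sub_C_add_smul_eq [Infinite k] {a α β : n → k}
    (ha : Function.Injective a)
    (h : ∀ t : k, ∏ j, (X - C ((a + t • α) j)) = ∏ j, (X - C ((a + t • β) j))) :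
    α = β := by
  funext j
  choose F hF using fun t => exists_eq_of_prod_X_sub_C_eq (h t) j
  -- two parameters sent to the same `j'` determine both the slope and the intercept
  obtain ⟨t₁, t₂, ht, hF₁₂⟩ := Finite.exists_ne_map_eq_of_infinite F
  have e₁ := hF t₁
  have e₂ := hF t₂
  simp only [Pi.add_apply, Pi.smul_apply, smul_eq_mul, hF₁₂] at e₁ e₂
  have hαβ : α j = β (F t₂) :=
    mul_left_cancel₀ (sub_ne_zero.mpr ht) (by linear_combination e₁ - e₂)
  have hj : j = F t₂ := ha (by linear_combination e₁ - t₁ * hαβ)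
  rw [hαβ, ← hj]

theorem eq_of_forall_prod_X_sub_C_sum_smul_eq [Infinite k] [Fintype ι] {c d : ι → n → k}
    {u₀ : ι → k} (hinj : Function.Injective (∑ i, u₀ i • c i))
    (h₀ : ∑ i, u₀ i • c i = ∑ i, u₀ i • d i)
    (h : ∀ u : ι → k, ∏ j, (X - C ((∑ i, u i • c i) j)) = ∏ j, (X - C ((∑ i, u i • d i) j))) :
    c = d := by
  classical
  have hline : ∀ (e : ι → n → k) (t : k) (i : ι),
      ∑ i', (u₀ + t • Pi.single i 1 : ι → k) i' • e i' = ∑ i', u₀ i' • e i' + t • e i := by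
    intro e t i
    simp [add_smul, Finset.sum_add_distrib, Pi.single_apply]
  funext i
  refine eq_of_forall_prod_X_sub_C_add_smul_eq hinj fun t => ?_
  rw [← hline, h₀, ← hline]
  exact h _

end Polynomial

theorem pencil_conjugate_of_charpoly_eq_of_simple_spectrum_general
    {k : Type} [Field k] [IsAlgClosed k] {r N : ℕ}
    (L M : Fin r → Matrix (Fin N) (Fin N) k)
    (hL : ∀ i j, L i * L j = L j * L i) (hM : ∀ i j, M i * M j = M j * M i)
    (hiso : ∀ u : Fin r → k, (∑ i, u i • L i).charpoly = (∑ i, u i • M i).charpoly)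
    (u₀ : Fin r → k) (hsep : (∑ i, u₀ i • L i).charpoly.Separable) :
    ∃ P : Matrix (Fin N) (Fin N) k, IsUnit P ∧ ∀ i, P * L i * P⁻¹ = M i := by
  obtain ⟨lam, hlam, hχ⟩ :=
    exists_injective_charpoly_eq_prod_of_separable (IsAlgClosed.splits _) hsep
  obtain ⟨V, hV, hVA⟩ := exists_isUnit_inv_mul_mul_eq_diagonal hlam hχ
  obtain ⟨W, hW, hWB⟩ := exists_isUnit_inv_mul_mul_eq_diagonal hlam ((hiso u₀).symm.trans hχ)
  obtain ⟨c, hc⟩ := exists_inv_mul_mul_eq_diagonal_of_commute hV hlam hVA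
    fun i => Commute.sum_right _ _ _ fun j _ => Commute.smul_right (hL i j) _
  obtain ⟨d, hd⟩ := exists_inv_mul_mul_eq_diagonal_of_commute hW hlam hWB
    fun i => Commute.sum_right _ _ _ fun j _ => Commute.smul_right (hM i j) _
  have hc₀ : ∑ i, u₀ i • c i = lam :=
    diagonal_injective (by rw [← inv_mul_sum_smul_mul_eq_diagonal hc, hVA])
  have hd₀ : ∑ i, u₀ i • d i = lam :=
    diagonal_injective (by rw [← inv_mul_sum_smul_mul_eq_diagonal hd, hWB])
  obtain rfl : c = d := eq_of_forall_prod_X_sub_C_sum_smul_eq (hc₀ ▸ hlam) (hc₀.trans hd₀.symm)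
    fun u => by rw [← charpoly_sum_smul_eq_prod hV hc, ← charpoly_sum_smul_eq_prod hW hd, hiso]
  have hVdet := (isUnit_iff_isUnit_det V).mp hV
  have hWdet := (isUnit_iff_isUnit_det W).mp hW
  refine ⟨W * V⁻¹, hW.mul (isUnit_nonsing_inv_iff.mpr hV), fun i => ?_⟩
  calc W * V⁻¹ * L i * (W * V⁻¹)⁻¹ = W * (V⁻¹ * L i * V) * W⁻¹ := by
        rw [Matrix.mul_inv_rev, nonsing_inv_nonsing_inv _ hVdet]; simp only [mul_assoc]
    _ = W * W⁻¹ * M i * (W * W⁻¹) := by rw [hc, ← hd]; simp only [mul_assoc]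
    _ = M i := by rw [mul_nonsing_inv _ hWdet, one_mul, mul_one]

/-- Two isospectral pencils of commuting endomorphisms of the same size, one of which
has simple spectrum (some linear combination has separable characteristic polynomial),
are conjugate. -/
theorem pencil_conjugate_of_charpoly_eq_of_simple_spectrum
    {k : Type} [Field k] [IsAlgClosed k] {r N : ℕ} (hr : 1 ≤ r)
    (L M : Fin r → Matrix (Fin N) (Fin N) k)
    (hL : ∀ i j, L i * L j = L j * L i) (hM : ∀ i j, M i * M j = M j * M i)
    (hiso : ∀ u : Fin r → k, (∑ i, u i • L i).charpoly = (∑ i, u i • M i).charpoly)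
    (u₀ : Fin r → k) (hsep : (∑ i, u₀ i • L i).charpoly.Separable) :
    ∃ P : Matrix (Fin N) (Fin N) k, IsUnit P ∧ ∀ i, P * L i * P⁻¹ = M i :=
  pencil_conjugate_of_charpoly_eq_of_simple_spectrum_general L M hL hM hiso u₀ hsep
end

section
/- Let K be a field and A ∈ Mat_N(K((s))) a square matrix over the field of formal Laurent series. Suppose that every coefficient of the characteristic polynomial of A lies in the subring K[[s]] of formal power series (i.e., each such Laurent series has zero coefficients in all negative degrees). Then A is conjugate over K((s)) to a matrix with entries in K[[s]]: there exists an invertible matrix P ∈ GL_N(K((s))) such that every entry of P · A · P⁻¹ lies in K[[s]]. -/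
/-!
The characteristic polynomial of `A` is monic with coefficients in the PID `K[[s]]`, so `A` is
integral over `K[[s]]` and `K[[s]][A]` is a finitely generated `K[[s]]`-module. Hence the images of
the standard basis under `K[[s]][A]` span an `A`-stable lattice in `K((s))^N`. A lattice over a
PID is free, and a `K[[s]]`-basis of it is a `K((s))`-basis of `K((s))^N` in which `A` has entries
in `K[[s]]`.
-/

open Matrix Module Polynomial
open scoped PowerSeries LaurentSeries

theorem isIntegral_of_monic_of_mem_lifts {R K B : Type*} [CommRing R] [CommRing K] [Algebra R K]
    [Ring B] [Algebra K B] [Algebra R B] [IsScalarTower R K B] {p : K[X]} (hp : p.Monic)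
    (hlifts : p ∈ lifts (algebraMap R K)) {x : B} (hx : aeval x p = 0) : IsIntegral R x := by
  obtain ⟨q, hqp, -, hq⟩ := lifts_and_natDegree_eq_and_monic hlifts hp
  exact ⟨q, hq, by rw [← aeval_def, ← aeval_map_algebraMap K, hqp, hx]⟩

theorem Matrix.isIntegral_of_charpoly_mem_lifts {R K n : Type*} [CommRing R] [CommRing K]
    [Algebra R K] [Fintype n] [DecidableEq n] {A : Matrix n n K}
    (hA : A.charpoly ∈ lifts (algebraMap R K)) : IsIntegral R A :=
  isIntegral_of_monic_of_mem_lifts A.charpoly_monic hA A.aeval_self_charpoly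

theorem LaurentSeries.mem_range_algebraMap_iff {K : Type*} [Field K] (f : K⸨X⸩) :
    f ∈ (algebraMap K⟦X⟧ K⸨X⸩).range ↔ ∀ n < 0, f.coeff n = 0 := by
  rw [RingHom.mem_range, coe_algebraMap, ← val_le_one_iff_eq_coe, ← WithZero.exp_zero,
    ← neg_zero, valuation_le_iff_coeff_lt_eq_zero, neg_zero]

section Lattice

variable {R K V : Type*} [CommRing R] [Field K] [Algebra R K] [AddCommGroup V] [Module K V]
  [Module R V] [IsScalarTower R K V]

theorem Module.End.exists_isLattice_mapsTo_of_isIntegral [FiniteDimensional K V]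
    {f : Module.End K V} (hf : IsIntegral R f) :
    ∃ M : Submodule R V, M.IsLattice K ∧ Set.MapsTo f M M := by
  let v := Module.finBasis K V
  let M := Submodule.map₂ (LinearMap.restrictScalarsₗ R K V V R)
    (Subalgebra.toSubmodule (Algebra.adjoin R {f})) (Submodule.span R (Set.range v))
  have hM : ∀ g ∈ Algebra.adjoin R {f}, ∀ y ∈ Submodule.span R (Set.range v), g y ∈ M :=
    fun g hg y hy => Submodule.apply_mem_map₂ _ hg hy
  refine ⟨M, ⟨?fg, ?span_eq_top⟩, ?mapsTo⟩
  case fg =>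
    obtain ⟨s, hs⟩ := hf.fg_adjoin_singleton
    change (Submodule.map₂ _ _ _).FG
    rw [← hs, Submodule.map₂_span_span]
    exact Submodule.fg_span (s.finite_toSet.image2 _ (Set.finite_range v))
  case span_eq_top =>
    refine eq_top_iff.2 (v.span_eq ▸ Submodule.span_mono ?_)
    rintro _ ⟨i, rfl⟩
    exact hM 1 (one_mem _) _ (Submodule.subset_span ⟨i, rfl⟩)
  case mapsTo =>
    have : M ≤ M.comap (f.restrictScalars R) := Submodule.map₂_le.2 fun g hg y hy =>
      hM (f * g) (mul_mem (Algebra.self_mem_adjoin_singleton R f) hg) y hy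
    exact fun x hx => this hx

variable [IsFractionRing R K] {κ : Type*} {M : Submodule R V} [M.IsLattice K]

theorem Module.Basis.extendOfIsLattice_repr (b : Basis κ R M) (x : M) (i : κ) :
    (b.extendOfIsLattice K).repr x i = algebraMap R K (b.repr x i) := by
  have : ((b.extendOfIsLattice K).repr.toLinearMap.restrictScalars R).comp M.subtype =
      (Finsupp.mapRange.linearMap (Algebra.linearMap R K)).comp b.repr.toLinearMap :=
    b.ext fun k => by simp [-Basis.extendOfIsLattice_apply, ← Basis.extendOfIsLattice_apply K b k]
  exact DFunLike.congr_fun (LinearMap.congr_fun this x) i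

theorem Module.Basis.toMatrix_extendOfIsLattice_mem_range [Fintype κ] [DecidableEq κ]
    (b : Basis κ R M) {f : Module.End K V} (hf : Set.MapsTo f M M) (i j : κ) :
    LinearMap.toMatrix (b.extendOfIsLattice K) (b.extendOfIsLattice K) f i j ∈
      (algebraMap R K).range := by
  rw [LinearMap.toMatrix_apply, Basis.extendOfIsLattice_apply]
  exact ⟨_, (b.extendOfIsLattice_repr ⟨_, hf (b j).2⟩ i).symm⟩

end Lattice

theorem Matrix.basis_toMatrix_mul_mul_inv {K n : Type*} [CommRing K] [Fintype n] [DecidableEq n]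
    (A : Matrix n n K) (B : Basis n K (n → K)) :
    B.toMatrix (Pi.basisFun K n) * A * (B.toMatrix (Pi.basisFun K n))⁻¹ =
      LinearMap.toMatrix B B (toLin' A) := by
  rw [Matrix.inv_eq_right_inv (B.toMatrix_mul_toMatrix_flip _),
    ← basis_toMatrix_mul_linearMap_toMatrix_mul_basis_toMatrix B (Pi.basisFun K n) B
      (Pi.basisFun K n),
    LinearMap.toMatrix_eq_toMatrix', LinearMap.toMatrix'_toLin']

theorem Matrix.exists_isUnit_conj_mem_range_of_isIntegral {R K n : Type*} [CommRing R]
    [IsDomain R] [IsPrincipalIdealRing R] [Field K] [Algebra R K] [IsFractionRing R K] [Fintype n]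
    [DecidableEq n] {A : Matrix n n K} (hA : IsIntegral R A) :
    ∃ P : Matrix n n K, IsUnit P ∧
      ∀ i j, (P * A * P⁻¹) i j ∈ (algebraMap R K).range := by
  have hf : IsIntegral R (toLin' A) :=
    hA.map ((toLinAlgEquiv' : Matrix n n K ≃ₐ[K] _).toAlgHom.restrictScalars R)
  obtain ⟨M, hM, hfM⟩ := Module.End.exists_isLattice_mapsTo_of_isIntegral hf
  have hcard : Fintype.card (Free.ChooseBasisIndex R M) = Fintype.card n := by
    rw [← finrank_eq_card_chooseBasisIndex, Submodule.IsLattice.finrank_of_pi]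
  let b : Basis n R M := (Free.chooseBasis R M).reindex (Fintype.equivOfCardEq hcard)
  let B := b.extendOfIsLattice K
  let _ := B.invertibleToMatrix (Pi.basisFun K n)
  refine ⟨B.toMatrix (Pi.basisFun K n), isUnit_of_invertible _, fun i j => ?_⟩
  rw [basis_toMatrix_mul_mul_inv]
  exact b.toMatrix_extendOfIsLattice_mem_range hfM i j

/-- If the characteristic polynomial of a matrix over the Laurent series field `K((s))`
has all its coefficients in the power series subring `K[[s]]` (i.e. all negative-degree
coefficients of these Laurent series vanish), then the matrix is conjugate over `K((s))`
to a matrix with entries in `K[[s]]`. -/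
theorem conjugate_to_integral_of_charpoly_integral
    {K : Type} [Field K] {N : ℕ} (A : Matrix (Fin N) (Fin N) (LaurentSeries K))
    (hA : ∀ (i : ℕ) (m : ℤ), m < 0 → (A.charpoly.coeff i).coeff m = 0) :
    ∃ P : Matrix (Fin N) (Fin N) (LaurentSeries K), IsUnit P ∧
      ∀ (a b : Fin N) (m : ℤ), m < 0 → ((P * A * P⁻¹) a b).coeff m = 0 := by
  have hlifts : A.charpoly ∈ lifts (algebraMap K⟦X⟧ K⸨X⸩) :=
    (lifts_iff_coeff_lifts _).2 fun i =>
      (LaurentSeries.mem_range_algebraMap_iff _).2 (hA i)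
  obtain ⟨P, hP, hPA⟩ :=
    exists_isUnit_conj_mem_range_of_isIntegral (isIntegral_of_charpoly_mem_lifts hlifts)
  exact ⟨P, hP, fun a b => (LaurentSeries.mem_range_algebraMap_iff _).1 (hPA a b)⟩
end

section
/- Assume the operators ∇_1,…,∇_r pairwise commute (flatness) and that ∇_i^p = 0 as an operator on R^N for every i (vanishing p-curvature). Then for every constant vector F₀ ∈ k^N, the vector F := (−1)^r · (∇_1^{p−1} ∘ ∇_2^{p−1} ∘ ⋯ ∘ ∇_r^{p−1}) ( (Π_{i=1}^{r} x_i^{p−1}) · F₀ ) ∈ R^N (the order of composition is irrelevant since the operators commute) is a flat section with prescribed value at the origin: ∇_i F = 0 for all i ∈ Fin r, and evaluating every entry of F at x = (0,…,0) gives F₀. -/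
/-!
Flatness: `∇ᵢ` commutes with every factor `∇ⱼ^(p-1)`, and `∇ᵢ ∘ ∇ᵢ^(p-1) = ∇ᵢ^p = 0`.

Value at the origin: if `xᵢ^n` divides every entry of `v`, then `∇ᵢ^n v ≡ ∂ᵢ^n v (mod xᵢ)`, and
`∂ᵢ^n (xᵢ^n g) ≡ n! g (mod xᵢ)`. For `i ∉ S` the derivation `∂ᵢ`, hence also `∇ᵢ`, preserves the
ideal `(xⱼ : j ∈ S)`, so applying the factors one variable at a time gives
`∇₁^(p-1) ⋯ ∇ᵣ^(p-1) (x^(p-1) F₀) ≡ ((p-1)!)^r F₀ (mod x₁, …, xᵣ)`, and `(p-1)! = -1` by Wilson.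
-/

open MvPolynomial Matrix

open scoped Nat

theorem Ideal.mulVec_mem_pi {A n : Type*} [CommRing A] [Fintype n] {I : Ideal A}
    (M : Matrix n n A) {v : n → A} (hv : v ∈ Ideal.pi fun _ => I) :
    M *ᵥ v ∈ Ideal.pi fun _ => I :=
  fun _ => Ideal.sum_mem _ fun b _ => Ideal.mul_mem_left _ _ (hv b)

theorem mul_list_prod_eq_zero_of_mem {M : Type*} [MonoidWithZero M] {s t : M} {l : List M}
    (ht : t ∈ l) (hst : s * t = 0) (hcomm : ∀ x ∈ l, Commute s x) : s * l.prod = 0 := by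
  obtain ⟨l₁, l₂, rfl⟩ := List.append_of_mem ht
  have h₁ : Commute s l₁.prod := Commute.list_prod_right _ _ fun x hx => hcomm x (by simp [hx])
  rw [List.prod_append, List.prod_cons, ← mul_assoc, h₁.eq, mul_assoc, ← mul_assoc s, hst,
    zero_mul, mul_zero]

theorem CharP.cast_factorial_pred_eq_neg_one (R : Type*) [Ring R] (p : ℕ) [Fact p.Prime]
    [CharP R p] : ((p - 1)! : R) = -1 := by
  have h := congrArg (ZMod.castHom (dvd_refl p) R) (ZMod.wilsons_lemma (p := p))
  rwa [map_natCast, map_neg, map_one] at h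

theorem List.foldr_comp_eq_coe_prod_map {ι R V : Type*} [Semiring R] [AddCommMonoid V]
    [Module R V] (T : ι → Module.End R V) (L : List ι) :
    L.foldr (fun i f => ⇑(T i) ∘ f) id = ⇑(L.map T).prod := by
  induction L with
  | nil => rfl
  | cons i L ih => rw [List.foldr_cons, ih]; rfl

namespace MvPolynomial

variable {R σ : Type*} [CommRing R]

theorem X_pow_dvd_pderiv {i : σ} {m : ℕ} {f : MvPolynomial σ R} (h : X i ^ (m + 1) ∣ f) :
    X i ^ m ∣ pderiv i f := by
  obtain ⟨g, rfl⟩ := h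
  refine ⟨X i * pderiv i g + ((m : MvPolynomial σ R) + 1) * g, ?_⟩
  simp only [Derivation.leibniz, Derivation.leibniz_pow, pderiv_X_self, smul_eq_mul,
    nsmul_eq_mul, Nat.add_sub_cancel]
  push_cast
  ring

theorem X_pow_dvd_iterate_pderiv {i : σ} {k m : ℕ} {f : MvPolynomial σ R}
    (h : X i ^ (k + m) ∣ f) : X i ^ m ∣ (pderiv i)^[k] f := by
  induction k generalizing f with
  | zero => simpa using h
  | succ k ih =>
    rw [Function.iterate_succ_apply]
    exact ih (X_pow_dvd_pderiv (by rwa [add_right_comm] at h))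

theorem X_dvd_iterate_pderiv_X_pow_mul_sub (i : σ) (k : ℕ) (g : MvPolynomial σ R) :
    X i ∣ (pderiv i)^[k] (X i ^ k * g) - (k ! : MvPolynomial σ R) * g := by
  induction k generalizing g with
  | zero => simp
  | succ k ih =>
    set g' := ((k : MvPolynomial σ R) + 1) * g + X i * pderiv i g
    have hstep : pderiv i (X i ^ (k + 1) * g) = X i ^ k * g' := by
      simp only [g', Derivation.leibniz, Derivation.leibniz_pow, pderiv_X_self, smul_eq_mul,
        nsmul_eq_mul, Nat.add_sub_cancel]
      push_cast
      ring
    have hsplit : (pderiv i)^[k + 1] (X i ^ (k + 1) * g) - ((k + 1)! : MvPolynomial σ R) * g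
        = ((pderiv i)^[k] (X i ^ k * g') - (k ! : MvPolynomial σ R) * g')
          + X i * ((k ! : MvPolynomial σ R) * pderiv i g) := by
      rw [Function.iterate_succ_apply, hstep, Nat.factorial_succ]
      push_cast
      ring
    rw [hsplit]
    exact dvd_add (ih g') (dvd_mul_right _ _)

theorem pderiv_mem_span_X_image {S : Set σ} {i : σ} (hi : i ∉ S) {f : MvPolynomial σ R}
    (hf : f ∈ Ideal.span (X '' S)) : pderiv i f ∈ Ideal.span (X '' S) := by
  induction hf using Submodule.span_induction with
  | mem x hx =>
    obtain ⟨j, hj, rfl⟩ := hx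
    rw [pderiv_X_of_ne (ne_of_mem_of_not_mem hj hi)]
    exact Ideal.zero_mem _
  | zero => rw [map_zero]; exact Ideal.zero_mem _
  | add x y _ _ hx hy => rw [map_add]; exact Ideal.add_mem _ hx hy
  | smul a x hx ihx =>
    rw [smul_eq_mul, Derivation.leibniz]
    exact Ideal.add_mem _ (Ideal.mul_mem_left _ a ihx) (Ideal.mul_mem_right _ _ hx)

theorem span_X_image_le_ker_eval_zero (S : Set σ) :
    Ideal.span (X '' S) ≤ RingHom.ker (eval (fun _ => 0) : MvPolynomial σ R →+* R) := by
  rw [Ideal.span_le]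
  rintro _ ⟨j, -, rfl⟩
  simp

section Connection

variable {n : Type*} [Fintype n]

noncomputable def connection (B : Matrix n n (MvPolynomial σ R)) (i : σ) :
    Module.End R (n → MvPolynomial σ R) :=
  LinearMap.pi (fun a => (pderiv i).toLinearMap ∘ₗ LinearMap.proj a) -
    B.mulVecLin.restrictScalars R

section

variable (B : Matrix n n (MvPolynomial σ R)) (i : σ)

theorem connection_apply (v : n → MvPolynomial σ R) (a : n) :
    connection B i v a = pderiv i (v a) - (B *ᵥ v) a :=
  rfl

theorem connection_mapsTo_pi {I : Ideal (MvPolynomial σ R)} (hI : ∀ f ∈ I, pderiv i f ∈ I) :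
    Set.MapsTo (connection B i) ↑(Ideal.pi fun _ : n => I) ↑(Ideal.pi fun _ : n => I) :=
  fun _ hv a => I.sub_mem (hI _ (hv a)) (Ideal.mulVec_mem_pi B hv a)

theorem X_pow_dvd_connection_pow_apply_sub {k m : ℕ} {v : n → MvPolynomial σ R}
    (hv : ∀ b, X i ^ (k + m) ∣ v b) (a : n) :
    X i ^ (m + 1) ∣ (connection B i ^ k) v a - (pderiv i)^[k] (v a) := by
  induction k generalizing m a with
  | zero => simp
  | succ k ih =>
    have hv' : ∀ b, X i ^ (k + (m + 1)) ∣ v b := by rwa [← add_assoc, add_right_comm]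
    set u := (connection B i ^ k) v
    have hu : ∀ b, X i ^ (m + 1) ∣ u b := fun b => by
      rw [← sub_add_cancel (u b) ((pderiv i)^[k] (v b))]
      exact dvd_add ((pow_dvd_pow _ (m + 1).le_succ).trans (ih hv' b))
        (X_pow_dvd_iterate_pderiv (hv' b))
    have hsplit : (connection B i ^ (k + 1)) v a - (pderiv i)^[k + 1] (v a)
        = pderiv i (u a - (pderiv i)^[k] (v a)) - (B *ᵥ u) a := by
      rw [pow_succ', Module.End.mul_apply, connection_apply, Function.iterate_succ_apply',
        map_sub]
      ring
    rw [hsplit]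
    exact dvd_sub (X_pow_dvd_pderiv (ih hv' a)) (Finset.dvd_sum fun b _ => (hu b).mul_left _)

theorem X_dvd_connection_pow_X_pow_smul_apply_sub (k : ℕ) (w : n → MvPolynomial σ R) (a : n) :
    X i ∣ (connection B i ^ k) ((X i ^ k : MvPolynomial σ R) • w) a
      - (k ! : MvPolynomial σ R) * w a := by
  have hconn := X_pow_dvd_connection_pow_apply_sub B i (m := 0)
    (v := (X i ^ k : MvPolynomial σ R) • w) (fun b => dvd_mul_right (X i ^ k) (w b)) a
  rw [zero_add, pow_one] at hconn
  rw [← sub_add_sub_cancel _ ((pderiv i)^[k] (X i ^ k * w a))]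
  exact dvd_add hconn (X_dvd_iterate_pderiv_X_pow_mul_sub i k (w a))

end

theorem list_prod_connection_pow_smul_sub_mem_pi (B : σ → Matrix n n (MvPolynomial σ R))
    {L : List σ} (hL : L.Nodup) (k : ℕ) (w : n → MvPolynomial σ R) :
    (L.map fun j => connection (B j) j ^ k).prod
        ((L.map fun j => (X j ^ k : MvPolynomial σ R)).prod • w) - (k ! ^ L.length) • w ∈
        Ideal.pi fun _ : n => Ideal.span (X '' {j | j ∈ L} : Set (MvPolynomial σ R)) := by
  induction L generalizing w with
  | nil => simp
  | cons i L ih =>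
    obtain ⟨hiL, hL⟩ := List.nodup_cons.1 hL
    have hmono : Ideal.span (X '' {j | j ∈ L} : Set (MvPolynomial σ R)) ≤
        Ideal.span (X '' {j | j ∈ i :: L}) :=
      Ideal.span_mono (Set.image_mono fun j hj => List.mem_cons_of_mem i hj)
    simp only [List.map_cons, List.prod_cons, List.length_cons]
    set w' := (X i ^ k : MvPolynomial σ R) • w
    set P := (L.map fun j => connection (B j) j ^ k).prod
    set Q := (L.map fun j => (X j ^ k : MvPolynomial σ R)).prod
    set c := k ! ^ L.length
    have hsplit : (connection (B i) i ^ k * P) ((X i ^ k * Q) • w) - (k ! ^ (L.length + 1)) • w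
        = (connection (B i) i ^ k) (P (Q • w') - c • w')
          + c • ((connection (B i) i ^ k) w' - k ! • w) := by
      rw [Module.End.mul_apply, mul_comm, mul_smul, map_sub, map_nsmul, smul_sub, pow_succ,
        mul_smul]
      abel
    rw [hsplit]
    refine Ideal.add_mem _ (fun a => hmono ?_) (Ideal.pi _ |>.nsmul_mem ?_ c)
    · rw [Module.End.coe_pow]
      have hstable := connection_mapsTo_pi (B i) i fun _ =>
        pderiv_mem_span_X_image (S := {j | j ∈ L}) hiL
      exact hstable.iterate k (ih hL w') a
    · intro a
      rw [Pi.sub_apply, Pi.smul_apply, nsmul_eq_mul]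
      obtain ⟨g, hg⟩ := X_dvd_connection_pow_X_pow_smul_apply_sub (B i) i k w a
      rw [hg]
      exact Ideal.mul_mem_right g _ (Ideal.subset_span ⟨i, List.mem_cons_self, rfl⟩)

end Connection

end MvPolynomial

theorem flat_section_formula_general
    {p : ℕ} [Fact p.Prime] {k : Type} [Field k] [CharP k p] {N r : ℕ}
    (B : Fin r → Matrix (Fin N) (Fin N) (MvPolynomial (Fin r) k))
    (D : Fin r → (Fin N → MvPolynomial (Fin r) k) → (Fin N → MvPolynomial (Fin r) k))
    (hD : ∀ i v, D i v = fun a => pderiv i (v a) - (B i *ᵥ v) a)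
    (hflat : ∀ i l v, D i (D l v) = D l (D i v))
    (hnilp : ∀ (i : Fin r) (v : Fin N → MvPolynomial (Fin r) k), (D i)^[p] v = 0)
    (F₀ : Fin N → k)
    (F : Fin N → MvPolynomial (Fin r) k)
    (hF : F = ((-1 : MvPolynomial (Fin r) k) ^ r) •
      ((List.finRange r).foldr (fun i f => (D i)^[p-1] ∘ f) id)
        (fun a => (∏ i : Fin r, (X i : MvPolynomial (Fin r) k) ^ (p - 1)) *
          MvPolynomial.C (F₀ a))) :
    (∀ i : Fin r, D i F = 0) ∧
    (∀ a : Fin N, MvPolynomial.eval (fun _ => (0 : k)) (F a) = F₀ a) := by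
  obtain rfl : D = fun i => ⇑(connection (B i) i) := funext fun i => funext (hD i)
  beta_reduce at hflat hnilp hF ⊢
  set P := ((List.finRange r).map fun i => connection (B i) i ^ (p - 1)).prod
  set w : Fin N → MvPolynomial (Fin r) k := fun a => C (F₀ a)
  have hFP :
      F = (-1 : k) ^ r • P ((∏ i : Fin r, (X i : MvPolynomial (Fin r) k) ^ (p - 1)) • w) := by
    simp_rw [hF, ← Module.End.coe_pow, List.foldr_comp_eq_coe_prod_map]
    rw [← algebraMap_smul (MvPolynomial (Fin r) k) ((-1 : k) ^ r), map_pow, map_neg, map_one]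
    rfl
  refine ⟨fun i => ?_, fun a => ?_⟩
  · have hcomm : ∀ j, Commute (connection (B i) i) (connection (B j) j) :=
      fun j => LinearMap.ext (hflat i j)
    have hnil : connection (B i) i * connection (B i) i ^ (p - 1) = 0 := by
      rw [← pow_succ', Nat.sub_add_cancel (Fact.out : p.Prime).one_le]
      exact LinearMap.ext fun v => by simpa [Module.End.coe_pow] using hnilp i v
    have hzero : connection (B i) i * P = 0 :=
      mul_list_prod_eq_zero_of_mem (List.mem_map_of_mem (List.mem_finRange i)) hnil
        (by simpa using fun j => (hcomm j).pow_right (p - 1))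
    rw [hFP, LinearMap.map_smul, ← Module.End.mul_apply, hzero, LinearMap.zero_apply, smul_zero]
  · have hmem := span_X_image_le_ker_eval_zero _
      (list_prod_connection_pow_smul_sub_mem_pi B (List.nodup_finRange r) (p - 1) w a)
    rw [List.length_finRange, ← Fin.prod_univ_def, Pi.sub_apply, RingHom.mem_ker, map_sub,
      sub_eq_zero] at hmem
    rw [hFP, Pi.smul_apply, smul_eval, hmem]
    simp [w, CharP.cast_factorial_pred_eq_neg_one k p, ← mul_assoc, ← mul_pow]

/-- Given commuting connection operators `∇_i v = ∂_i v − B_i · v` on `R^N`,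
`R = k[x_1,…,x_r]`, `char k = p`, with vanishing `p`-curvature (`∇_i^p = 0`), the
explicit vector `F = (−1)^r ∇_1^{p−1}⋯∇_r^{p−1}((Π_i x_i^{p−1})·F₀)` is a flat section
with `F(0) = F₀`. -/
theorem flat_section_formula
    {p : ℕ} [Fact p.Prime] {k : Type} [Field k] [CharP k p] {N r : ℕ} (hr : 1 ≤ r)
    (B : Fin r → Matrix (Fin N) (Fin N) (MvPolynomial (Fin r) k))
    (D : Fin r → (Fin N → MvPolynomial (Fin r) k) → (Fin N → MvPolynomial (Fin r) k))
    (hD : ∀ i v, D i v = fun a => pderiv i (v a) - (B i *ᵥ v) a)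
    (hflat : ∀ i l v, D i (D l v) = D l (D i v))
    (hnilp : ∀ (i : Fin r) (v : Fin N → MvPolynomial (Fin r) k), (D i)^[p] v = 0)
    (F₀ : Fin N → k)
    (F : Fin N → MvPolynomial (Fin r) k)
    (hF : F = ((-1 : MvPolynomial (Fin r) k) ^ r) •
      ((List.finRange r).foldr (fun i f => (D i)^[p-1] ∘ f) id)
        (fun a => (∏ i : Fin r, (X i : MvPolynomial (Fin r) k) ^ (p - 1)) *
          MvPolynomial.C (F₀ a))) :
    (∀ i : Fin r, D i F = 0) ∧
    (∀ a : Fin N, MvPolynomial.eval (fun _ => (0 : k)) (F a) = F₀ a) :=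
  flat_section_formula_general B D hD hflat hnilp F₀ F hF
end

section
/- A polynomial f ∈ k[s_1,…,s_n] satisfies τ_j f = f for every j ∈ Fin n (i.e., f is invariant under all shifts s_j ↦ s_j + 1) if and only if there exists g ∈ k[s_1,…,s_n] with f = g(s_1 − s_1^p, s_2 − s_2^p, …, s_n − s_n^p) (substitution of s_j − s_j^p for the j-th variable of g). -/
section OneVar
open Polynomial


theorem onevar {p : ℕ} [Fact p.Prime] {R : Type*} [CommRing R] [IsDomain R] [CharP R p] :
    ∀ d (f : R[X]), f.natDegree ≤ d → f.comp (X + 1) = f → ∃ g : R[X], f = g.comp (X - X ^ p) := by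
  have hp2 : 2 ≤ p := (Fact.out : p.Prime).two_le
  intro d
  induction d with
  | zero =>
      intro f hd _
      refine ⟨C (f.coeff 0), ?_⟩
      rw [C_comp]
      exact Polynomial.eq_C_of_natDegree_le_zero hd
  | succ d ih =>
      intro f hdeg hf
      by_cases hle : f.natDegree ≤ d
      · exact ih f hle hf
      have hd : f.natDegree = d + 1 := le_antisymm hdeg (by omega)
      set a := f.coeff (d + 1) with ha_def
      have hfne : f ≠ 0 := fun h0 => by simp [h0] at hd
      have ha : a ≠ 0 := by
        have := Polynomial.leadingCoeff_ne_zero.2 hfne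
        rwa [leadingCoeff, hd] at this
      have hcomp : f.comp (X + 1)
          = ∑ e ∈ Finset.range (d + 2), C (f.coeff e) * (X + 1) ^ e := by
        rw [comp_eq_sum_left]
        have := Polynomial.sum_over_range (p := f)
          (f := fun (e : ℕ) (c : R) => C c * (X + 1) ^ e) (fun n => by simp)
        rw [this, hd]
      have hsum : (f.comp (X + 1)).coeff d
          = ∑ e ∈ Finset.range (d + 2), f.coeff e * (e.choose d : R) := by
        rw [hcomp, Polynomial.finset_sum_coeff]
        refine Finset.sum_congr rfl fun e _ => ?_
        simp [coeff_C_mul, coeff_X_add_one_pow]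
      have hz : ∀ e ∈ Finset.range d, f.coeff e * (e.choose d : R) = 0 := by
        intro e he
        rw [Nat.choose_eq_zero_of_lt (Finset.mem_range.1 he)]
        simp
      have h1 : (f.comp (X + 1)).coeff d = f.coeff d := by rw [hf]
      rw [hsum, Finset.sum_range_succ, Finset.sum_range_succ, Finset.sum_eq_zero hz,
        zero_add, Nat.choose_self, Nat.choose_succ_self_right] at h1
      push_cast at h1
      have h2 : a * ((d : R) + 1) = 0 := by linear_combination h1
      have hcast : (((d + 1 : ℕ)) : R) = 0 := by
        rcases mul_eq_zero.1 h2 with h | h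
        · exact absurd h ha
        · push_cast; exact h
      obtain ⟨m, hm⟩ := (CharP.cast_eq_zero_iff R p (d + 1)).1 hcast
      have hmono : ((X : R[X]) ^ p - X).Monic :=
        monic_X_pow_sub (by simpa using (by exact_mod_cast (by omega : 1 < p) : (1 : WithBot ℕ) < p))
      have hndeg : (((X : R[X]) ^ p - X) ^ m).natDegree = p * m := by
        rw [natDegree_pow, natDegree_sub_eq_left_of_natDegree_lt (by simp; omega)]
        simp [mul_comm]
      set f2 := f - C a * ((X : R[X]) ^ p - X) ^ m with hf2
      have hCne : C a * ((X : R[X]) ^ p - X) ^ m ≠ 0 :=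
        mul_ne_zero (by simpa using ha) (hmono.pow m).ne_zero
      have hdegeq : f.degree = (C a * ((X : R[X]) ^ p - X) ^ m).degree := by
        rw [degree_eq_natDegree hfne, degree_eq_natDegree hCne, hd,
          natDegree_C_mul (by simpa using ha), hndeg, ← hm]
      have hlc : f.leadingCoeff = (C a * ((X : R[X]) ^ p - X) ^ m).leadingCoeff := by
        rw [leadingCoeff_mul, (hmono.pow m).leadingCoeff, leadingCoeff_C, mul_one,
          leadingCoeff, hd]
      have hdlt : f2.degree < f.degree := degree_sub_lt hdegeq hfne hlc
      have hinv2 : f2.comp (X + 1) = f2 := by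
        rw [hf2, sub_comp, mul_comp, C_comp, pow_comp, sub_comp, pow_comp, X_comp, hf]
        congr 3
        rw [add_pow_char]
        simp
      have hnd2 : f2.natDegree ≤ d := by
        by_cases h0 : f2 = 0
        · simp [h0]
        · have := (natDegree_lt_iff_degree_lt h0).2
            (by rw [degree_eq_natDegree hfne, hd] at hdlt; exact_mod_cast hdlt)
          omega
      obtain ⟨g2, hg2⟩ := ih f2 hnd2 hinv2
      refine ⟨g2 + C a * (-X) ^ m, ?_⟩
      rw [add_comp, mul_comp, C_comp, pow_comp, neg_comp, X_comp, ← hg2]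
      rw [hf2, neg_sub]
      ring

theorem compinj {p : ℕ} [Fact p.Prime] {R : Type*} [CommRing R] [IsDomain R]
    {g1 g2 : R[X]} (h : g1.comp (X - X ^ p) = g2.comp (X - X ^ p)) : g1 = g2 := by
  have hp2 : 2 ≤ p := (Fact.out : p.Prime).two_le
  have h0 : (g1 - g2).comp (X - X ^ p) = 0 := by rw [sub_comp, h, sub_self]
  rcases comp_eq_zero_iff.1 h0 with h' | ⟨-, h'⟩
  · exact sub_eq_zero.1 h'
  · exfalso
    have hc1 : ((X : R[X]) - X ^ p).coeff 1 = 1 := by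
      rw [coeff_sub, coeff_X_one, coeff_X_pow, if_neg (by omega), sub_zero]
    rw [h', coeff_C, if_neg one_ne_zero] at hc1
    exact one_ne_zero hc1.symm

end OneVar

section Claims
open MvPolynomial

variable {k : Type} [CommSemiring k] {n : ℕ}

theorem claimA (f : MvPolynomial (Fin (n+1)) k) :
    finSuccEquiv k n (aeval (fun l : Fin (n+1) => if l = 0 then X l + 1 else X l) f)
      = Polynomial.aeval (Polynomial.X + 1) (finSuccEquiv k n f) := by
  have h : ((finSuccEquiv k n).toAlgHom.comp
        (aeval (fun l : Fin (n+1) => if l = 0 then X l + 1 else X l)))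
      = ((Polynomial.aeval (Polynomial.X + 1 : Polynomial (MvPolynomial (Fin n) k))).restrictScalars
          k).comp (finSuccEquiv k n).toAlgHom := by
    apply algHom_ext
    intro i
    induction i using Fin.cases with
    | zero => simp [finSuccEquiv_X_zero]
    | succ l => simp [Fin.succ_ne_zero, finSuccEquiv_X_succ]
  exact DFunLike.congr_fun h f

theorem claimB (j : Fin n) (f : MvPolynomial (Fin (n+1)) k) :
    finSuccEquiv k n (aeval (fun l : Fin (n+1) => if l = j.succ then X l + 1 else X l) f)
      = Polynomial.mapAlgHom (aeval (fun l : Fin n => if l = j then X l + 1 else X l))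
          (finSuccEquiv k n f) := by
  have h : ((finSuccEquiv k n).toAlgHom.comp
        (aeval (fun l : Fin (n+1) => if l = j.succ then X l + 1 else X l)))
      = (Polynomial.mapAlgHom
          (aeval (fun l : Fin n => if l = j then X l + 1 else X l))).comp
          (finSuccEquiv k n).toAlgHom := by
    apply algHom_ext
    intro i
    induction i using Fin.cases with
    | zero => simp [Fin.succ_ne_zero, (Fin.succ_ne_zero j).symm, finSuccEquiv_X_zero]
    | succ l =>
        by_cases hlj : l = j
        · simp [hlj, finSuccEquiv_X_succ]
        · simp [hlj, Fin.succ_inj.ne.2 hlj, finSuccEquiv_X_succ,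
            (fun h => hlj (Fin.succ_inj.1 h) : l.succ ≠ j.succ)]
  exact DFunLike.congr_fun h f

theorem claimC {k : Type} [CommRing k] {n : ℕ} {p : ℕ} (g : MvPolynomial (Fin (n+1)) k) :
    finSuccEquiv k n (aeval (fun j : Fin (n+1) => X j - X j ^ p) g)
      = Polynomial.aeval (R := MvPolynomial (Fin n) k)
          (Polynomial.X - Polynomial.X ^ p)
          (Polynomial.mapAlgHom (aeval (fun j : Fin n => X j - X j ^ p))
            (finSuccEquiv k n g)) := by
  have h : ((finSuccEquiv k n).toAlgHom.comp
        (aeval (fun j : Fin (n+1) => X j - X j ^ p)))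
      = (((Polynomial.aeval (R := MvPolynomial (Fin n) k)
            (Polynomial.X - Polynomial.X ^ p)).restrictScalars k).comp
          (Polynomial.mapAlgHom (aeval (fun j : Fin n => X j - X j ^ p)))).comp
          (finSuccEquiv k n).toAlgHom := by
    apply algHom_ext
    intro i
    induction i using Fin.cases with
    | zero => simp [finSuccEquiv_X_zero]
    | succ l => simp [finSuccEquiv_X_succ]
  exact DFunLike.congr_fun h g

end Claims

theorem mapAlgHom_eq {R A B : Type*} [CommSemiring R] [Semiring A] [Semiring B]
    [Algebra R A] [Algebra R B] (f : A →ₐ[R] B) (q : Polynomial A) :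
    Polynomial.mapAlgHom f q = q.map f.toRingHom := by
  simp [Polynomial.mapAlgHom]

open MvPolynomial

theorem mainlem {p : ℕ} [Fact p.Prime] {k : Type} [Field k] [CharP k p] :
    ∀ (n : ℕ) (f : MvPolynomial (Fin n) k),
      (∀ j : Fin n, aeval (fun l : Fin n => if l = j then X l + 1 else X l) f = f) →
      ∃ g : MvPolynomial (Fin n) k, f = aeval (fun j : Fin n => X j - X j ^ p) g := by
  intro n
  induction n with
  | zero =>
      intro f _
      refine ⟨f, ?_⟩
      have h : (aeval (fun j : Fin 0 => X j - X j ^ p) :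
          MvPolynomial (Fin 0) k →ₐ[k] MvPolynomial (Fin 0) k) = AlgHom.id k _ :=
        algHom_ext (fun i => i.elim0)
      rw [h]; rfl
  | succ n ih =>
      intro f hf
      -- one-variable invariance
      have h0 : (finSuccEquiv k n f).comp (Polynomial.X + 1) = finSuccEquiv k n f := by
        rw [Polynomial.comp_eq_aeval, ← claimA f, hf 0]
      obtain ⟨G, hG⟩ := onevar (p := p) (finSuccEquiv k n f).natDegree (finSuccEquiv k n f)
        le_rfl h0
      -- coefficients of G are invariant
      have hGinv : ∀ i (j : Fin n),
          aeval (fun l : Fin n => if l = j then X l + 1 else X l) (G.coeff i) = G.coeff i := by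
        intro i j
        have hmap : Polynomial.map
            (aeval (fun l : Fin n => if l = j then X l + 1 else X l) :
              MvPolynomial (Fin n) k →ₐ[k] MvPolynomial (Fin n) k).toRingHom
            (finSuccEquiv k n f) = finSuccEquiv k n f := by
          have hb := claimB j f
          rw [hf j.succ, mapAlgHom_eq] at hb
          exact hb.symm
        rw [hG, Polynomial.map_comp, Polynomial.map_sub, Polynomial.map_pow,
          Polynomial.map_X] at hmap
        have hGfix := compinj (p := p) hmap
        have hco := congrArg (fun q => Polynomial.coeff q i) hGfix
        simpa using hco
      choose D hD using fun i => ih (G.coeff i) (hGinv i)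
      refine ⟨(finSuccEquiv k n).symm
        (∑ i ∈ Finset.range (G.natDegree + 1), Polynomial.C (D i) * Polynomial.X ^ i), ?_⟩
      apply (finSuccEquiv k n).injective
      rw [claimC]
      have hmapg : Polynomial.mapAlgHom
          (aeval (fun j : Fin n => X j - X j ^ p) :
            MvPolynomial (Fin n) k →ₐ[k] MvPolynomial (Fin n) k)
          (finSuccEquiv k n ((finSuccEquiv k n).symm
            (∑ i ∈ Finset.range (G.natDegree + 1), Polynomial.C (D i) * Polynomial.X ^ i)))
          = G := by
        rw [(finSuccEquiv k n).apply_symm_apply, mapAlgHom_eq, Polynomial.map_sum]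
        conv_rhs => rw [G.as_sum_range]
        refine Finset.sum_congr rfl fun i _ => ?_
        rw [Polynomial.map_mul, Polynomial.map_C, Polynomial.map_pow, Polynomial.map_X,
          ← Polynomial.C_mul_X_pow_eq_monomial]
        congr 1
        simpa using (hD i).symm
      rw [hmapg, ← Polynomial.comp_eq_aeval, ← hG]

/-- In characteristic `p`, a polynomial `f ∈ k[s_1,…,s_n]` is invariant under all shifts
`s_j ↦ s_j + 1` iff it is a polynomial in `s_1 − s_1^p, …, s_n − s_n^p`. -/
theorem shift_invariant_iff_poly_in_sj_sub_sjp
    {p : ℕ} [Fact p.Prime] {k : Type} [Field k] [CharP k p] {n : ℕ} (hn : 1 ≤ n)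
    (f : MvPolynomial (Fin n) k) :
    (∀ j : Fin n,
        aeval (fun l : Fin n => if l = j then X l + 1 else X l) f = f) ↔
      ∃ g : MvPolynomial (Fin n) k,
        f = aeval (fun j : Fin n => X j - X j ^ p) g := by
  constructor
  · exact mainlem n f
  · rintro ⟨g, rfl⟩ j
    have h : ((aeval (fun l : Fin n => if l = j then X l + 1 else X l) :
          MvPolynomial (Fin n) k →ₐ[k] MvPolynomial (Fin n) k)).comp
        (aeval (fun l : Fin n => X l - X l ^ p))
        = aeval (R := k) (fun l : Fin n => X l - X l ^ p) := by
      apply algHom_ext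
      intro l
      simp only [AlgHom.comp_apply, aeval_X, map_sub, map_pow]
      by_cases hlj : l = j
      · subst hlj
        rw [if_pos rfl, add_pow_char]
        ring
      · simp [hlj]
    exact DFunLike.congr_fun h g
end

section
/- Let m ∈ ℕ and let b ∈ k[s_1,…,s_n] satisfy: (1) the total degree of b is at most p·m; (2) τ_j b = b for every j ∈ Fin n; (3) every monomial occurring in b with nonzero coefficient has total degree at least m. Then there exists a polynomial β ∈ k[s_1,…,s_n], homogeneous of degree m, such that b = β(s_1 − s_1^p, …, s_n − s_n^p). -/
/-!
Over a domain `A` of characteristic `p`, divide a polynomial `f` with `f(X + 1) = f` by the monic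
`X ^ p - X`, which is itself shift invariant: by uniqueness of division the quotient and remainder
are shift invariant, and the remainder, of degree `< p` and taking one value at the `p` distinct
points `0, 1, …, p - 1`, is a constant. Induction on the degree gives `f = g(X ^ p - X)`, and
induction on the number of variables (splitting off `s_0` with `finSuccEquiv`, where the shifts of
the other variables act on coefficients) gives `b = β(s_1 - s_1 ^ p, …, s_n - s_n ^ p)`.

Since `s_j - s_j ^ p = s_j (1 - s_j ^ (p - 1))`, a monomial of `β` of least total degree reappears
with the same coefficient in `b`, so every monomial of `β` has degree `≥ m`. For any monomial order
the leading monomial of `s_j - s_j ^ p` is `s_j ^ p`, so the leading monomial of `b` is `p` times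
that of `β`; with the degree-lexicographic order this gives `deg b = p · deg β`, hence `deg β ≤ m`.
-/

namespace Polynomial

variable {A : Type*} [CommRing A] {p : ℕ}

theorem natDegree_X_pow_sub_X [Nontrivial A] (hp : 1 < p) :
    (X ^ p - X : A[X]).natDegree = p := by
  rw [natDegree_sub_eq_left_of_natDegree_lt] <;> rw [natDegree_X_pow]
  rwa [natDegree_X]

theorem comp_X_pow_sub_X_injective [IsDomain A] (hp : 1 < p) :
    Function.Injective fun f : A[X] => f.comp (X ^ p - X) := by
  intro f g hfg
  rw [← sub_eq_zero]
  rcases comp_eq_zero_iff.1 (show (f - g).comp (X ^ p - X) = 0 by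
    rw [sub_comp]; exact sub_eq_zero.2 hfg) with h | ⟨_, hC⟩
  · exact h
  · have := congrArg natDegree hC
    rw [natDegree_X_pow_sub_X hp, natDegree_C] at this
    omega

variable [Fact p.Prime] [CharP A p]

theorem X_pow_sub_X_comp_X_add_one : (X ^ p - X : A[X]).comp (X + 1) = X ^ p - X := by
  rw [sub_comp, pow_comp, X_comp, add_pow_char, one_pow]
  ring

theorem eq_C_eval_zero_of_comp_X_add_one_eq [IsDomain A] {f : A[X]} (hf : f.comp (X + 1) = f)
    (hdeg : f.natDegree < p) : f = C (f.eval 0) := by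
  have hshift : ∀ x : A, f.eval (x + 1) = f.eval x := fun x => by
    simpa using congrArg (eval x) hf
  have hnat : ∀ i : ℕ, f.eval (i : A) = f.eval 0 := fun i => by
    induction i with
    | zero => simp
    | succ i ih => rw [Nat.cast_succ, hshift, ih]
  refine sub_eq_zero.1 (eq_zero_of_natDegree_lt_card_of_eval_eq_zero (f - C (f.eval 0))
    (ZMod.castHom dvd_rfl A).injective (fun a => ?_) ?_)
  · rw [eval_sub, eval_C, sub_eq_zero, ZMod.castHom_apply, ← ZMod.natCast_val, hnat]
  · rwa [natDegree_sub_C, ZMod.card]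

theorem exists_eq_comp_X_pow_sub_X_of_comp_X_add_one_eq [IsDomain A] {f : A[X]}
    (hf : f.comp (X + 1) = f) : ∃ g : A[X], f = g.comp (X ^ p - X) := by
  have hp := (Fact.out : p.Prime).one_lt
  have hmonic : (X ^ p - X : A[X]).Monic :=
    monic_X_pow_sub (by rw [degree_X]; exact_mod_cast hp)
  induction hN : f.natDegree using Nat.strong_induction_on generalizing f with
  | _ N ih =>
  by_cases hlt : N < p
  · exact ⟨C (f.eval 0),
      by rw [C_comp, ← eq_C_eval_zero_of_comp_X_add_one_eq hf (hN ▸ hlt)]⟩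
  set w : A[X] := X ^ p - X
  have hw : w.natDegree = p := natDegree_X_pow_sub_X hp
  set q := f /ₘ w
  set r := f %ₘ w
  have hr : (r.comp (X + 1)).degree < w.degree := by
    rw [← C_1, ← taylor_apply, degree_taylor]
    exact degree_modByMonic_lt f hmonic
  have hw_inv : w.comp (X + 1) = w := X_pow_sub_X_comp_X_add_one
  obtain ⟨hq_inv, hr_inv⟩ := div_modByMonic_unique (f := f) (q.comp (X + 1)) (r.comp (X + 1))
    hmonic ⟨by rw [← hw_inv, ← mul_comp, ← add_comp, modByMonic_add_div, hf], hr⟩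
  have hr_const : r = C (r.eval 0) := eq_C_eval_zero_of_comp_X_add_one_eq hr_inv.symm
    (hw ▸ natDegree_modByMonic_lt f hmonic (fun h => by rw [h, natDegree_one] at hw; omega))
  obtain ⟨g, hg⟩ :=
    ih q.natDegree (by rw [natDegree_divByMonic _ hmonic, hw]; omega) hq_inv.symm rfl
  refine ⟨g * X + C (r.eval 0), ?_⟩
  rw [add_comp, mul_comp, ← hg, X_comp, C_comp, ← hr_const, mul_comm, add_comm,
    modByMonic_add_div]

end Polynomial

namespace MvPolynomial

section ShiftInvariants

variable {R : Type*} [CommRing R] {n : ℕ}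

theorem finSuccEquiv_aeval (f : Fin (n + 1) → MvPolynomial (Fin (n + 1)) R)
    (g : Fin n → MvPolynomial (Fin n) R) (q : Polynomial (MvPolynomial (Fin n) R))
    (h_zero : finSuccEquiv R n (f 0) = q)
    (h_succ : ∀ i, finSuccEquiv R n (f i.succ) = Polynomial.C (g i))
    (b : MvPolynomial (Fin (n + 1)) R) :
    finSuccEquiv R n (aeval f b) =
      (Polynomial.mapAlgHom (aeval g) (finSuccEquiv R n b)).comp q := by
  rw [Polynomial.comp_eq_aeval]
  change ((finSuccEquiv R n).toAlgHom.comp (aeval f)) b =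
    (((Polynomial.aeval q).restrictScalars R).comp
      ((Polynomial.mapAlgHom (aeval g)).comp (finSuccEquiv R n).toAlgHom)) b
  congr 1
  refine algHom_ext fun i => ?_
  cases i using Fin.cases <;> simp [h_zero, h_succ, finSuccEquiv_X_zero, finSuccEquiv_X_succ]

theorem finSuccEquiv_aeval_shift_zero (b : MvPolynomial (Fin (n + 1)) R) :
    finSuccEquiv R n (aeval (fun l => if l = 0 then X l + 1 else X l) b) =
      (finSuccEquiv R n b).comp (Polynomial.X + 1) := by
  rw [finSuccEquiv_aeval _ X (Polynomial.X + 1) (by simp [finSuccEquiv_X_zero])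
    (fun i => by simp [Fin.succ_ne_zero, finSuccEquiv_X_succ]), aeval_X_left,
    Polynomial.mapAlgHom_id, AlgHom.id_apply]

theorem finSuccEquiv_aeval_shift_succ (j : Fin n) (b : MvPolynomial (Fin (n + 1)) R) :
    finSuccEquiv R n (aeval (fun l => if l = j.succ then X l + 1 else X l) b) =
      Polynomial.mapAlgHom (aeval fun l => if l = j then X l + 1 else X l)
        (finSuccEquiv R n b) := by
  rw [finSuccEquiv_aeval _ (fun l => if l = j then X l + 1 else X l) Polynomial.X
    (by simp [(Fin.succ_ne_zero j).symm, finSuccEquiv_X_zero])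
    (fun i => by by_cases h : i = j <;> simp [h, finSuccEquiv_X_succ]), Polynomial.comp_X]

theorem finSuccEquiv_aeval_X_sub_X_pow (p : ℕ) (b : MvPolynomial (Fin (n + 1)) R) :
    finSuccEquiv R n (aeval (fun j => X j - X j ^ p) b) =
      (Polynomial.mapAlgHom (aeval fun j => X j - X j ^ p) (finSuccEquiv R n b)).comp
        (Polynomial.X - Polynomial.X ^ p) :=
  finSuccEquiv_aeval _ _ _ (by simp [finSuccEquiv_X_zero])
    (fun i => by simp [finSuccEquiv_X_succ]) b

theorem exists_eq_aeval_X_sub_X_pow_of_shift_invariant {p : ℕ} [Fact p.Prime] [IsDomain R]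
    [CharP R p] : ∀ {n : ℕ} (b : MvPolynomial (Fin n) R),
      (∀ j, aeval (fun l => if l = j then X l + 1 else X l) b = b) →
      ∃ β : MvPolynomial (Fin n) R, b = aeval (fun j => X j - X j ^ p) β
  | 0, b, _ => ⟨b, by
      rw [show aeval _ = AlgHom.id R _ from algHom_ext fun i => i.elim0, AlgHom.id_apply]⟩
  | n + 1, b, hb => by
    have hp := (Fact.out : p.Prime).one_lt
    obtain ⟨g, hg⟩ := Polynomial.exists_eq_comp_X_pow_sub_X_of_comp_X_add_one_eq (p := p)
      (f := finSuccEquiv R n b) (by rw [← finSuccEquiv_aeval_shift_zero, hb 0])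
    -- `X ^ p - X` has constant coefficients, so the invariance of `finSuccEquiv R n b` under the
    -- coefficient shifts passes to `g` by injectivity of composition with `X ^ p - X`.
    have hg_inv : ∀ j,
        Polynomial.mapAlgHom (aeval fun l => if l = j then X l + 1 else X l) g = g :=
      fun j => Polynomial.comp_X_pow_sub_X_injective hp <| by
        simp only
        rw [← hg, ← hb j.succ, finSuccEquiv_aeval_shift_succ, hg, Polynomial.coe_mapAlgHom,
          Polynomial.map_comp]
        simp
    choose γ hγ using fun i => exists_eq_aeval_X_sub_X_pow_of_shift_invariant (p := p) (g.coeff i)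
      fun j => by simpa using congrArg (Polynomial.coeff · i) (hg_inv j)
    obtain ⟨G, hG⟩ := (Polynomial.mem_lifts g).1 <|
      (Polynomial.lifts_iff_coeff_lifts (f := (aeval fun j => (X j - X j ^ p :
        MvPolynomial (Fin n) R)).toRingHom) g).2 fun i => ⟨γ i, (hγ i).symm⟩
    -- `X ^ p - X = (-X) ∘ (X - X ^ p)`
    refine ⟨(finSuccEquiv R n).symm (G.comp (-Polynomial.X)), (finSuccEquiv R n).injective ?_⟩
    rw [finSuccEquiv_aeval_X_sub_X_pow, AlgEquiv.apply_symm_apply, hg, ← hG,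
      Polynomial.coe_mapAlgHom, Polynomial.map_comp, Polynomial.comp_assoc]
    simp

end ShiftInvariants

section Degrees

open scoped MonomialOrder

variable {σ R : Type*} [CommRing R] {p : ℕ}

theorem coeff_aeval_eq_sum {τ : Type*} (f : σ → MvPolynomial τ R) (F : MvPolynomial σ R)
    (d : τ →₀ ℕ) :
    coeff d (aeval f F) = ∑ e ∈ F.support, coeff e F * coeff d (aeval f (monomial e 1)) := by
  conv_lhs => rw [F.as_sum]
  simp only [map_sum, coeff_sum]
  refine Finset.sum_congr rfl fun e _ => ?_
  simp only [aeval_monomial, algebraMap_eq, map_one, one_mul, coeff_C_mul]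

theorem coeff_aeval_X_sub_X_pow_monomial_of_degree_le [DecidableEq σ] (hp : 1 < p)
    {d e : σ →₀ ℕ} (h : d.degree ≤ e.degree) :
    coeff d (aeval (fun j => (X j - X j ^ p : MvPolynomial σ R)) (monomial e 1)) =
      if d = e then 1 else 0 := by
  set U := aeval (fun j => (1 - X j ^ (p - 1) : MvPolynomial σ R)) (monomial e 1)
  have hfactor : aeval (fun j => (X j - X j ^ p : MvPolynomial σ R)) (monomial e 1) =
      monomial e 1 * U := by
    have ht : (fun j => (X j - X j ^ p : MvPolynomial σ R)) =
        fun j => X j * (1 - X j ^ (p - 1)) := by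
      ext1 j; rw [mul_sub, mul_one, ← pow_succ', Nat.sub_add_cancel hp.le]
    simp only [U, ht, aeval_monomial, map_one, one_mul, mul_pow, Finsupp.prod_mul]
    rw [monomial_eq, C_1, one_mul]
  have hU : constantCoeff U = 1 := by
    simp [U, aeval_monomial, map_finsuppProd, (Nat.sub_pos_of_lt hp).ne']
  rw [hfactor, coeff_monomial_mul', one_mul]
  split_ifs with hed hde hde
  · rw [hde, tsub_self, ← constantCoeff_eq, hU]
  · refine absurd ?_ hde
    obtain ⟨c, rfl⟩ := exists_add_of_le hed
    simp_all [Finsupp.degree_eq_zero_iff]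
  · exact absurd (hde ▸ le_rfl) hed
  · rfl

theorem coeff_aeval_X_sub_X_pow_of_forall_degree_le (hp : 1 < p) {F : MvPolynomial σ R}
    {d : σ →₀ ℕ} (hd : ∀ e ∈ F.support, d.degree ≤ e.degree) :
    coeff d (aeval (fun j => (X j - X j ^ p : MvPolynomial σ R)) F) = coeff d F := by
  classical
  rw [coeff_aeval_eq_sum, Finset.sum_congr rfl fun e he => by
    rw [coeff_aeval_X_sub_X_pow_monomial_of_degree_le hp (hd e he)]]
  simp only [mul_ite, mul_one, mul_zero, Finset.sum_ite_eq, mem_support_iff]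
  split_ifs with h
  · rfl
  · exact (not_not.1 h).symm

theorem X_sub_X_pow_ne_zero [Nontrivial R] (hp : 1 < p) (j : σ) :
    (X j - X j ^ p : MvPolynomial σ R) ≠ 0 := by
  classical
  intro h
  have := congrArg (coeff (Finsupp.single j 1)) h
  simp [X_pow_eq_monomial, coeff_monomial, (Finsupp.single_injective j).eq_iff, hp.ne'] at this

theorem degree_X_sub_X_pow [IsDomain R] (m : MonomialOrder σ) (hp : 1 < p) (j : σ) :
    m.degree (X j - X j ^ p : MvPolynomial σ R) = Finsupp.single j p := by
  have hlt : m.degree (X j : MvPolynomial σ R) ≺[m] m.degree (X j ^ p : MvPolynomial σ R) := by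
    rw [m.degree_pow, m.degree_X, Finsupp.smul_single, smul_eq_mul, mul_one]
    exact lt_of_le_of_ne (m.toSyn_monotone (Finsupp.single_le_single.2 hp.le))
      (m.toSyn.injective.ne ((Finsupp.single_injective j).ne hp.ne))
  rw [← neg_sub, m.degree_neg, m.degree_sub_of_lt hlt, m.degree_pow, m.degree_X,
    Finsupp.smul_single, smul_eq_mul, mul_one]

theorem degree_aeval_X_sub_X_pow_monomial [IsDomain R] (m : MonomialOrder σ) (hp : 1 < p)
    (e : σ →₀ ℕ) :
    m.degree (aeval (fun j => (X j - X j ^ p : MvPolynomial σ R)) (monomial e 1)) = p • e := by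
  rw [aeval_monomial, map_one, one_mul, Finsupp.prod, m.degree_prod
    (fun j _ => pow_ne_zero _ (X_sub_X_pow_ne_zero hp j))]
  conv_rhs => rw [← e.sum_single]
  simp only [m.degree_pow, degree_X_sub_X_pow m hp, Finsupp.sum, Finset.smul_sum,
    Finsupp.smul_single, smul_eq_mul, mul_comm]

theorem aeval_X_sub_X_pow_monomial_ne_zero [IsDomain R] (hp : 1 < p) (e : σ →₀ ℕ) :
    aeval (fun j => (X j - X j ^ p : MvPolynomial σ R)) (monomial e 1) ≠ 0 := by
  rw [aeval_monomial, map_one, one_mul]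
  exact Finset.prod_ne_zero_iff.2 fun j _ => pow_ne_zero _ (X_sub_X_pow_ne_zero hp j)

theorem degree_aeval_X_sub_X_pow [IsDomain R] (m : MonomialOrder σ) (hp : 1 < p)
    (F : MvPolynomial σ R) :
    m.degree (aeval (fun j => (X j - X j ^ p : MvPolynomial σ R)) F) = p • m.degree F := by
  rcases eq_or_ne F 0 with rfl | hF
  · simp
  have hmono : ∀ e ∈ F.support, p • e ≼[m] p • m.degree F := fun e he => by
    simpa only [map_nsmul] using nsmul_le_nsmul_right (m.le_degree he) p
  have hlt : ∀ e ∈ F.support, e ≠ m.degree F → p • e ≺[m] p • m.degree F :=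
    fun e he hne => by
      simpa only [map_nsmul] using nsmul_lt_nsmul_right (by omega)
        (lt_of_le_of_ne (m.le_degree he) (m.toSyn.injective.ne hne))
  have hcoeff :
      coeff (p • m.degree F) (aeval (fun j => (X j - X j ^ p : MvPolynomial σ R)) F) =
        coeff (m.degree F) F * m.leadingCoeff
          (aeval (fun j => (X j - X j ^ p : MvPolynomial σ R)) (monomial (m.degree F) 1)) := by
    rw [coeff_aeval_eq_sum, Finset.sum_eq_single (m.degree F)]
    · rw [MonomialOrder.leadingCoeff, degree_aeval_X_sub_X_pow_monomial m hp]
    · intro e he hne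
      refine mul_eq_zero_of_right _ (m.coeff_eq_zero_of_lt ?_)
      rw [degree_aeval_X_sub_X_pow_monomial m hp]
      exact hlt e he hne
    · exact fun h => absurd (m.degree_mem_support hF) h
  refine m.toSyn.injective (le_antisymm ?_ (m.le_degree ?_))
  · rw [m.degree_le_iff]
    intro c hc
    rw [mem_support_iff, coeff_aeval_eq_sum] at hc
    obtain ⟨e, he, hce⟩ := Finset.exists_ne_zero_of_sum_ne_zero hc
    calc m.toSyn c ≤ m.toSyn (p • e) := by
          rw [← degree_aeval_X_sub_X_pow_monomial m hp (R := R)]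
          exact m.le_degree (mem_support_iff.2 (right_ne_zero_of_mul hce))
      _ ≤ m.toSyn (p • m.degree F) := hmono e he
  · rw [mem_support_iff, hcoeff]
    exact mul_ne_zero ((m.coeff_degree_ne_zero_iff).2 hF)
      (m.leadingCoeff_ne_zero_iff.2 (aeval_X_sub_X_pow_monomial_ne_zero hp _))

theorem totalDegree_aeval_X_sub_X_pow [LinearOrder σ] [WellFoundedGT σ] [IsDomain R]
    (hp : 1 < p) (F : MvPolynomial σ R) :
    (aeval (fun j => (X j - X j ^ p : MvPolynomial σ R)) F).totalDegree = p * F.totalDegree := by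
  rw [← degree_degLexDegree, ← degree_degLexDegree,
    degree_aeval_X_sub_X_pow MonomialOrder.degLex hp, map_nsmul, smul_eq_mul]

end Degrees

end MvPolynomial

open MvPolynomial

theorem shift_invariant_bounded_eq_homogeneous_subst_general
    {p : ℕ} [Fact p.Prime] {k : Type} [Field k] [CharP k p] {n : ℕ}
    (m : ℕ) (b : MvPolynomial (Fin n) k)
    (hdeg : b.totalDegree ≤ p * m)
    (hinv : ∀ j : Fin n,
      aeval (fun l : Fin n => if l = j then X l + 1 else X l) b = b)
    (hlow : ∀ d ∈ b.support, m ≤ d.sum fun _ e => e) :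
    ∃ β : MvPolynomial (Fin n) k, β.IsHomogeneous m ∧
      b = aeval (fun j : Fin n => X j - X j ^ p) β := by
  have hp := (Fact.out : p.Prime).one_lt
  obtain ⟨β, rfl⟩ := exists_eq_aeval_X_sub_X_pow_of_shift_invariant b hinv
  refine ⟨β, fun e he => ?_, rfl⟩
  have he : e ∈ β.support := mem_support_iff.2 he
  obtain ⟨e₀, he₀, hmin⟩ := β.support.exists_min_image Finsupp.degree ⟨e, he⟩
  have hm_le : m ≤ e₀.degree := hlow e₀ <| by
    rwa [mem_support_iff, coeff_aeval_X_sub_X_pow_of_forall_degree_le hp hmin, ← mem_support_iff]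
  have hle_m : β.totalDegree ≤ m :=
    Nat.le_of_mul_le_mul_left (totalDegree_aeval_X_sub_X_pow hp β ▸ hdeg) (by omega)
  rw [Pi.one_def, ← Finsupp.degree_eq_weight_one]
  exact le_antisymm ((le_totalDegree he).trans hle_m) (hm_le.trans (hmin e he))

/-- If `b ∈ k[s_1,…,s_n]` (char `k` = `p`) has total degree at most `p·m`, is invariant
under all shifts `s_j ↦ s_j + 1`, and all its monomials have degree at least `m`, then
`b = β(s_1 − s_1^p, …, s_n − s_n^p)` for a homogeneous polynomial `β` of degree `m`. -/
theorem shift_invariant_bounded_eq_homogeneous_subst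
    {p : ℕ} [Fact p.Prime] {k : Type} [Field k] [CharP k p] {n : ℕ} (hn : 1 ≤ n)
    (m : ℕ) (b : MvPolynomial (Fin n) k)
    (hdeg : b.totalDegree ≤ p * m)
    (hinv : ∀ j : Fin n,
      aeval (fun l : Fin n => if l = j then X l + 1 else X l) b = b)
    (hlow : ∀ d ∈ b.support, m ≤ d.sum fun _ e => e) :
    ∃ β : MvPolynomial (Fin n) k, β.IsHomogeneous m ∧
      b = aeval (fun j : Fin n => X j - X j ^ p) β :=
  shift_invariant_bounded_eq_homogeneous_subst_general m b hdeg hinv hlow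
end

section
/- Let C ∈ Mat_N(R) and a_1,…,a_n ∈ Mat_N(R) satisfy the Lax-type equations ∂_{s_j} C = a_j · C − C · a_j for every j ∈ Fin n (where ∂_{s_j} = pderiv j is applied to each entry of C), and suppose that C vanishes at s = 0 (the constant term of every entry of C is zero). Then every entry of C lies in the ideal of R generated by s_1^p, …, s_n^p. -/
/-!
Induct on the monomials `m` all of whose exponents are `< p`. Writing `m = μ + e_j`, the `j`-th
Lax equation gives `(μ j + 1) • coeff m C = coeff μ (a_j C - C a_j)`. The right-hand side only
involves coefficients of `C` at monomials `≤ μ < m`, which vanish by induction, and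
`μ j + 1 = m j` is invertible in characteristic `p`. Hence every monomial of an entry of `C` has
some exponent `≥ p`.
-/

open MvPolynomial Matrix

namespace MvPolynomial

section CommSemiring

variable {σ R : Type*} [CommSemiring R]

-- The monomial ideal generated by the `X j ^ (μ j + 1)`.
def coeffLEVanishingIdeal (μ : σ →₀ ℕ) : Ideal (MvPolynomial σ R) where
  carrier := {f | ∀ ν ≤ μ, coeff ν f = 0}
  zero_mem' _ _ := coeff_zero _
  add_mem' hf hg ν hν := by rw [coeff_add, hf ν hν, hg ν hν, add_zero]
  smul_mem' g f hf ν hν := by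
    classical
    rw [smul_eq_mul, coeff_mul]
    refine Finset.sum_eq_zero fun x hx => ?_
    have hx : x.1 + x.2 = ν := Finset.HasAntidiagonal.mem_antidiagonal.1 hx
    rw [hf x.2 (le_add_self.trans (hx ▸ hν)), mul_zero]

theorem mem_span_range_X_pow {p : ℕ} {f : MvPolynomial σ R}
    (hf : ∀ m : σ →₀ ℕ, (∀ j, m j < p) → coeff m f = 0) :
    f ∈ Ideal.span (Set.range fun j : σ => (X j : MvPolynomial σ R) ^ p) := by
  have hspan : (Set.range fun j : σ => (X j : MvPolynomial σ R) ^ p) =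
      (fun s => monomial s 1) '' Set.range fun j => Finsupp.single j p := by
    simp only [← Set.range_comp, Function.comp_def, X_pow_eq_monomial]
  rw [hspan, mem_ideal_span_monomial_image]
  intro m hm
  by_contra! hlt
  refine mem_support_iff.1 hm (hf m fun j => not_le.1 fun hj => ?_)
  exact hlt _ ⟨j, rfl⟩ (Finsupp.single_le_iff.2 hj)

end CommSemiring

theorem coeff_add_single_eq_zero_of_coeff_pderiv_eq_zero {σ R : Type*} [CommRing R]
    [NoZeroDivisors R] {p : ℕ} [CharP R p] {f : MvPolynomial σ R} {μ : σ →₀ ℕ} {j : σ}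
    (hμp : μ j + 1 < p) (h : coeff μ (pderiv j f) = 0) :
    coeff (μ + Finsupp.single j 1) f = 0 := by
  have hcast : ((μ j + 1 : ℕ) : R) ≠ 0 := by
    rw [Ne, CharP.cast_eq_zero_iff R p]
    exact Nat.not_dvd_of_pos_of_lt (μ j).succ_pos hμp
  rw [coeff_pderiv] at h
  exact (mul_eq_zero.1 h).resolve_right (mod_cast hcast)

end MvPolynomial

namespace Matrix

theorem mul_sub_mul_apply_mem {ι R : Type*} [Fintype ι] [CommRing R] {I : Ideal R}
    {C : Matrix ι ι R} (hC : ∀ i i', C i i' ∈ I) (a : Matrix ι ι R) (i i' : ι) :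
    (a * C - C * a) i i' ∈ I :=
  I.sub_mem (I.sum_mem fun k _ => I.mul_mem_left _ (hC k i'))
    (I.sum_mem fun k _ => I.mul_mem_right _ (hC i k))

theorem coeff_eq_zero_of_lax {σ ι R : Type*} [Fintype ι] [CommRing R] [NoZeroDivisors R]
    {p : ℕ} [CharP R p] {C : Matrix ι ι (MvPolynomial σ R)}
    {a : σ → Matrix ι ι (MvPolynomial σ R)}
    (hLax : ∀ j, C.map (⇑(pderiv j)) = a j * C - C * a j)
    (hzero : ∀ i i', constantCoeff (C i i') = 0) (m : σ →₀ ℕ) (hm : ∀ j, m j < p) (i i' : ι) :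
    coeff m (C i i') = 0 := by
  induction m using WellFoundedLT.induction generalizing i i' with
  | _ m ih =>
  obtain rfl | hm0 := eq_or_ne m 0
  · exact hzero i i'
  obtain ⟨j, hj⟩ := Finsupp.ne_iff.1 hm0
  obtain ⟨μ, rfl⟩ : ∃ μ, m = μ + Finsupp.single j 1 := by
    obtain ⟨μ, hμ⟩ := le_iff_exists_add.1 (Finsupp.single_le_iff.2 (Nat.one_le_iff_ne_zero.2 hj))
    exact ⟨μ, hμ.trans (add_comm _ _)⟩
  have hμ_lt : μ < μ + Finsupp.single j 1 :=
    lt_add_of_pos_right μ (pos_iff_ne_zero.2 (Finsupp.single_ne_zero.2 one_ne_zero))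
  have hC : ∀ k k', C k k' ∈ coeffLEVanishingIdeal μ := fun k k' ν hν =>
    ih ν (hν.trans_lt hμ_lt) (fun l => ((hν.trans le_self_add) l).trans_lt (hm l)) k k'
  have hderiv := congrFun (congrFun (hLax j) i) i' ▸ mul_sub_mul_apply_mem hC (a j) i i'
  exact coeff_add_single_eq_zero_of_coeff_pderiv_eq_zero (by simpa using hm j) (hderiv μ le_rfl)

end Matrix

theorem entries_mem_span_pow_p_of_lax_general
    {p : ℕ} {F : Type} [Field F] [CharP F p] {N n : ℕ}
    (C : Matrix (Fin N) (Fin N) (MvPolynomial (Fin n) F))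
    (a : Fin n → Matrix (Fin N) (Fin N) (MvPolynomial (Fin n) F))
    (hLax : ∀ j : Fin n, C.map (⇑(pderiv j)) = a j * C - C * a j)
    (hzero : ∀ i i' : Fin N, constantCoeff (C i i') = 0) :
    ∀ i i' : Fin N, C i i' ∈
      Ideal.span (Set.range fun j : Fin n => (X j : MvPolynomial (Fin n) F) ^ p) := fun i i' =>
  mem_span_range_X_pow fun m hm => C.coeff_eq_zero_of_lax hLax hzero m hm i i'

/-- Lax-type equations in characteristic `p`: if matrices `C, a_1, …, a_n` over
`R = F[s_1,…,s_n]` satisfy `∂_{s_j} C = [a_j, C]` for all `j` and `C` vanishes at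
`s = 0`, then every entry of `C` lies in the ideal generated by `s_1^p, …, s_n^p`. -/
theorem entries_mem_span_pow_p_of_lax
    {p : ℕ} [Fact p.Prime] {F : Type} [Field F] [CharP F p] {N n : ℕ} (hn : 1 ≤ n)
    (C : Matrix (Fin N) (Fin N) (MvPolynomial (Fin n) F))
    (a : Fin n → Matrix (Fin N) (Fin N) (MvPolynomial (Fin n) F))
    (hLax : ∀ j : Fin n, C.map (⇑(pderiv j)) = a j * C - C * a j)
    (hzero : ∀ i i' : Fin N, constantCoeff (C i i') = 0) :
    ∀ i i' : Fin N, C i i' ∈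
      Ideal.span (Set.range fun j : Fin n => (X j : MvPolynomial (Fin n) F) ^ p) :=
  entries_mem_span_pow_p_of_lax_general C a hLax hzero
end

section
/- Let A_1,…,A_p ∈ Mat_N(k) and A := Σ_{j=1}^{p} A_j, and consider over the polynomial ring k[q] the ordered product M := (1 + (q−1)·A_1)(1 + (q−1)·A_2)⋯(1 + (q−1)·A_p) ∈ Mat_N(k[q]). If every coefficient of the characteristic polynomial of M (an element of k[q]) lies in the subalgebra k[q^p] (polynomials in q^p), then the characteristic polynomial of M equals the characteristic polynomial of 1 + p^{−1}(q^p − 1)·A (where A is viewed in Mat_N(k[q]) and p^{−1} is the inverse of the image of p in k). -/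
open Matrix Polynomial

/-!
Write `M = 1 + (q - 1) • Y`; expanding the product to first order in `q - 1` gives `Y(1) = A`.
The `β`-th coefficient of `charpoly (c • Y)` is `c ^ (N - β)` times that of `charpoly Y`, so with
`K = N - β` the `β`-th coefficient of `charpoly (M - 1)` is `(q - 1)^K y` where `y(1)` is the
`β`-th coefficient of `charpoly A`. The shift `t ↦ t + 1` keeps it a polynomial `g(q^p)`, and since
the entries of `M` have degree at most `p` it has degree at most `pK`. As
`(q^p - 1)/(q - 1)` takes the invertible value `p` at `q = 1`, `(q - 1)^K ∣ g(q^p)` forces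
`(q - 1)^K ∣ g`, hence `g = e (q - 1)^K` and the coefficient equals
`e (q^p - 1)^K = (p⁻¹(q^p - 1))^K y(1)`, the `β`-th coefficient of `charpoly (p⁻¹(q^p - 1) • A)`.
-/

theorem List.exists_prod_map_one_add_smul {R S : Type*} [CommSemiring R] [Semiring S]
    [Algebra R S] (c : R) (l : List S) :
    ∃ E : S, (l.map fun B => 1 + c • B).prod = 1 + c • (l.sum + c • E) := by
  induction l with
  | nil => exact ⟨0, by simp⟩
  | cons B l ih =>
    obtain ⟨E, hE⟩ := ih
    refine ⟨B * l.sum + E + c • (B * E), ?_⟩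
    rw [List.map_cons, List.prod_cons, hE, List.sum_cons]
    simp only [mul_add, add_mul, one_mul, mul_one, smul_add, smul_mul_assoc, mul_smul_comm]
    abel

namespace Matrix

variable {n : Type*} [DecidableEq n] {R : Type*} [CommRing R]

theorem natDegree_one_add_X_sub_one_smul_map_C_apply_le (B : Matrix n n R) (i j : n) :
    ((1 + (X - 1 : R[X]) • B.map C) i j).natDegree ≤ 1 := by
  rw [Matrix.add_apply, Matrix.smul_apply, map_apply, one_apply, smul_eq_mul]
  split_ifs <;> compute_degree

theorem natDegree_one_apply (i j : n) : ((1 : Matrix n n R[X]) i j).natDegree = 0 := by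
  rw [one_apply]
  split_ifs <;> simp

variable [Fintype n]

theorem coeff_charpoly_smul (r : R) (Y : Matrix n n R) (β : ℕ) :
    (r • Y).charpoly.coeff β = r ^ (Fintype.card n - β) * Y.charpoly.coeff β := by
  nontriviality R
  rcases le_or_gt β (Fintype.card n) with hβ | hβ
  · obtain ⟨k, hk, rfl⟩ : ∃ k ≤ Fintype.card n, β = Fintype.card n - k :=
      ⟨Fintype.card n - β, Nat.sub_le _ _, by omega⟩
    have hminor : ∀ s ∈ Finset.univ.powersetCard k,
        ((r • Y).submatrix (Subtype.val : s → n) Subtype.val).det =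
          r ^ k * (Y.submatrix (Subtype.val : s → n) Subtype.val).det :=
      fun s hs => by
        rw [show (r • Y).submatrix (Subtype.val : s → n) Subtype.val =
          r • Y.submatrix Subtype.val Subtype.val from rfl, det_smul, Fintype.card_coe,
          (Finset.mem_powersetCard.mp hs).2]
    rw [charpoly_coeff_eq_sum_minors _ _ hk, charpoly_coeff_eq_sum_minors _ _ hk,
      Nat.sub_sub_self hk, Finset.sum_congr rfl hminor, ← Finset.mul_sum]
    ring
  · have hlt : ∀ Z : Matrix n n R, Z.charpoly.natDegree < β := fun Z => by
      rwa [charpoly_natDegree_eq_dim]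
    rw [coeff_eq_zero_of_natDegree_lt (hlt _), coeff_eq_zero_of_natDegree_lt (hlt _), mul_zero]

theorem natDegree_det_le {M : Matrix n n R[X]} {d : ℕ} (h : ∀ i j, (M i j).natDegree ≤ d) :
    M.det.natDegree ≤ Fintype.card n * d := by
  rw [det_apply]
  refine natDegree_sum_le_of_forall_le _ _ fun σ _ => ?_
  rw [Units.smul_def]
  refine (natDegree_smul_le _ _).trans ((natDegree_prod_le _ _).trans ?_)
  simpa using Finset.sum_le_card_nsmul Finset.univ _ d fun i _ => h (σ i) i

theorem natDegree_coeff_charpoly_le {M : Matrix n n R[X]} {d : ℕ}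
    (h : ∀ i j, (M i j).natDegree ≤ d) (β : ℕ) :
    (M.charpoly.coeff β).natDegree ≤ d * (Fintype.card n - β) := by
  nontriviality R
  rcases le_or_gt β (Fintype.card n) with hβ | hβ
  · obtain ⟨k, hk, rfl⟩ : ∃ k ≤ Fintype.card n, β = Fintype.card n - k :=
      ⟨Fintype.card n - β, Nat.sub_le _ _, by omega⟩
    rw [charpoly_coeff_eq_sum_minors _ _ hk, Nat.sub_sub_self hk,
      show ((-1 : R[X]) ^ k) = C ((-1) ^ k) by simp]
    refine (natDegree_C_mul_le _ _).trans (natDegree_sum_le_of_forall_le _ _ fun s hs => ?_)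
    rw [mul_comm, ← (Finset.mem_powersetCard.mp hs).2, ← Fintype.card_coe]
    exact natDegree_det_le fun i j => h _ _
  · rw [coeff_eq_zero_of_natDegree_lt (by rwa [charpoly_natDegree_eq_dim]), natDegree_zero]
    exact Nat.zero_le _

theorem natDegree_list_prod_apply_le {l : List (Matrix n n R[X])} {d : ℕ}
    (h : ∀ B ∈ l, ∀ i j, (B i j).natDegree ≤ d) (i j : n) :
    (l.prod i j).natDegree ≤ d * l.length := by
  induction l generalizing i with
  | nil => by_cases hij : i = j <;> simp [hij]
  | cons B l ih =>
    rw [List.prod_cons, List.length_cons, mul_apply, mul_add_one, add_comm]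
    refine natDegree_sum_le_of_forall_le _ _ fun m _ => natDegree_mul_le.trans ?_
    exact add_le_add (h B List.mem_cons_self i m)
      (ih (fun B' hB' => h B' (List.mem_cons_of_mem _ hB')) m)

theorem natDegree_prod_one_add_X_sub_one_smul_sub_one_apply_le (l : List (Matrix n n R))
    (i j : n) :
    (((l.map fun B : Matrix n n R => 1 + (X - 1 : R[X]) • B.map C).prod - 1) i j).natDegree ≤
      l.length := by
  have hprod := natDegree_list_prod_apply_le (d := 1)
    (l := l.map fun B : Matrix n n R => 1 + (X - 1 : R[X]) • B.map C)
    (List.forall_mem_map.2 fun B _ => natDegree_one_add_X_sub_one_smul_map_C_apply_le B) i j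
  rw [one_mul, List.length_map] at hprod
  rw [Matrix.sub_apply]
  exact (natDegree_sub_le _ _).trans
    (max_le hprod ((natDegree_one_apply i j).trans_le (Nat.zero_le _)))

theorem exists_prod_one_add_X_sub_one_smul_sub_one_eq (l : List (Matrix n n R)) :
    ∃ Y : Matrix n n R[X],
      (l.map fun B : Matrix n n R => 1 + (X - 1 : R[X]) • B.map C).prod - 1 = (X - 1 : R[X]) • Y ∧
        Y.map (evalRingHom 1) = l.sum := by
  obtain ⟨E, hE⟩ := List.exists_prod_map_one_add_smul (X - 1 : R[X]) (l.map (·.map C))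
  have hsum : (l.map (·.map C)).sum = l.sum.map C :=
    (map_list_sum (C : R →+* R[X]).mapMatrix l).symm
  refine ⟨l.sum.map C + (X - 1 : R[X]) • E, ?_, ?_⟩
  · rw [List.map_map, Function.comp_def, hsum] at hE
    rw [hE, add_sub_cancel_left]
  · ext i j
    simp

end Matrix

namespace Polynomial

theorem exists_coeff_comp_X_add_one_eq_comp_X_pow {R : Type*} [CommSemiring R] {p : ℕ}
    {F : R[X][X]} (hF : ∀ i, ∃ g : R[X], F.coeff i = g.comp (X ^ p)) (β : ℕ) :
    ∃ g : R[X], (F.comp (X + C 1)).coeff β = g.comp (X ^ p) := by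
  obtain ⟨G, rfl⟩ : ∃ G : R[X][X], G.map (compRingHom (X ^ p)) = F :=
    (mem_lifts F).1 <| (lifts_iff_coeff_lifts F).2 fun i => (hF i).imp fun g hg => hg.symm
  refine ⟨(taylor 1 G).coeff β, ?_⟩
  conv_lhs => rw [← taylor_apply, ← map_one (compRingHom (X ^ p)), ← map_taylor, coeff_map]
  rfl

variable {k : Type*} [Field k] {p : ℕ}

theorem X_sub_one_pow_dvd_of_dvd_comp_X_pow (hp : (p : k) ≠ 0) {K : ℕ} {g : k[X]}
    (h : (X - C 1) ^ K ∣ g.comp (X ^ p)) : (X - C 1) ^ K ∣ g := by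
  induction K generalizing g with
  | zero => exact one_dvd g
  | succ K ih =>
    have hroot : g.IsRoot 1 := by
      simpa using dvd_iff_isRoot.1 ((dvd_pow_self _ K.succ_ne_zero).trans h)
    obtain ⟨g', rfl⟩ := dvd_iff_isRoot.2 hroot
    have hcomp : ((X - C 1) * g').comp (X ^ p) =
        (X - C 1) * ((∑ i ∈ Finset.range p, X ^ i) * g'.comp (X ^ p)) := by
      rw [mul_comp, sub_comp, X_comp, C_comp, C_1, ← mul_geom_sum]
      ring
    have hcop : IsCoprime ((X - C 1) ^ K) (∑ i ∈ Finset.range p, (X : k[X]) ^ i) := by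
      refine IsCoprime.pow_left ((irreducible_X_sub_C 1).coprime_iff_not_dvd.2 ?_)
      rw [dvd_iff_isRoot]
      simpa [eval_finsetSum] using hp
    rw [hcomp, pow_succ', mul_dvd_mul_iff_left (X_sub_C_ne_zero 1)] at h
    rw [pow_succ']
    exact mul_dvd_mul_left _ (ih (hcop.dvd_of_dvd_mul_left h))

theorem comp_X_pow_eq_of_eq_X_sub_one_pow_mul (hp : (p : k) ≠ 0) {K : ℕ} {g y : k[X]}
    (hdeg : (g.comp (X ^ p)).natDegree ≤ p * K) (h : g.comp (X ^ p) = (X - 1) ^ K * y) :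
    g.comp (X ^ p) = (C (p : k)⁻¹ * (X ^ p - 1)) ^ K * C (y.eval 1) := by
  have hp0 : 0 < p := Nat.pos_of_ne_zero fun h0 => hp (by simp [h0])
  have hg : g = C g.leadingCoeff * (X - C 1) ^ K := by
    refine eq_leadingCoeff_mul_of_monic_of_dvd_of_natDegree_le ((monic_X_sub_C 1).pow K)
      (X_sub_one_pow_dvd_of_dvd_comp_X_pow hp ⟨y, by rw [h, C_1]⟩) ?_
    rw [natDegree_comp, natDegree_X_pow] at hdeg
    rw [natDegree_pow, natDegree_X_sub_C, mul_one]
    exact le_of_mul_le_mul_right (by rwa [mul_comm p] at hdeg) hp0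
  set e := g.leadingCoeff
  obtain ⟨s, hXs, hs⟩ : ∃ s : k[X], X ^ p - 1 = (X - 1) * s ∧ s.eval 1 = p :=
    ⟨∑ i ∈ Finset.range p, X ^ i, (mul_geom_sum X p).symm, by simp [eval_finsetSum]⟩
  have hgX : g.comp (X ^ p) = (X - 1) ^ K * (C e * s ^ K) := by
    rw [hg, mul_comp, C_comp, pow_comp, sub_comp, X_comp, C_comp, C_1, hXs, mul_pow]
    ring
  have hy : y = C e * s ^ K := mul_left_cancel₀ (pow_ne_zero K (X_sub_C_ne_zero 1)) (by
    rw [C_1, ← h, hgX])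
  have hinv : C (p : k)⁻¹ ^ K * C (p : k) ^ K = 1 := by
    rw [← mul_pow, ← C_mul, inv_mul_cancel₀ hp, C_1, one_pow]
  rw [hgX, hy, eval_mul, eval_C, eval_pow, hs, hXs, C_mul, C_pow, mul_pow, mul_pow]
  linear_combination (-(X - 1) ^ K * s ^ K * C e) * hinv

theorem charpoly_X_sub_one_smul_eq {n : Type*} [Fintype n] [DecidableEq n]
    (hp : (p : k) ≠ 0) (Y : Matrix n n k[X])
    (hdeg : ∀ i j, (((X - 1 : k[X]) • Y) i j).natDegree ≤ p)
    (hcoeff : ∀ β, ∃ g : k[X], ((X - 1 : k[X]) • Y).charpoly.coeff β = g.comp (X ^ p)) :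
    ((X - 1 : k[X]) • Y).charpoly =
      ((C (p : k)⁻¹ * (X ^ p - 1)) • (Y.map (evalRingHom 1)).map C).charpoly := by
  ext β
  obtain ⟨g, hg⟩ := hcoeff β
  have hdegβ : (g.comp (X ^ p)).natDegree ≤ p * (Fintype.card n - β) :=
    hg ▸ natDegree_coeff_charpoly_le hdeg β
  have hfac : g.comp (X ^ p) = (X - 1) ^ (Fintype.card n - β) * Y.charpoly.coeff β := by
    rw [← hg, coeff_charpoly_smul]
  rw [hg, comp_X_pow_eq_of_eq_X_sub_one_pow_mul hp hdegβ hfac, coeff_charpoly_smul, charpoly_map,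
    coeff_map, charpoly_map, coeff_map, coe_evalRingHom]

end Polynomial

theorem charpoly_ordered_product_eq_of_coeffs_in_qp_general
    {p : ℕ} {k : Type} [Field k] (hp : (p : k) ≠ 0) {N : ℕ}
    (A : Fin p → Matrix (Fin N) (Fin N) k)
    (M : Matrix (Fin N) (Fin N) (Polynomial k))
    (hM : M = ((List.finRange p).map fun j =>
      (1 + ((X : Polynomial k) - 1) • (A j).map Polynomial.C :
        Matrix (Fin N) (Fin N) (Polynomial k))).prod)
    (hcoeff : ∀ i : ℕ, ∃ g : Polynomial k, M.charpoly.coeff i = g.comp (X ^ p)) :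
    M.charpoly =
      (1 + (Polynomial.C ((p : k)⁻¹) * (X ^ p - 1)) •
        (∑ j, A j).map Polynomial.C).charpoly := by
  obtain ⟨Y, hMY, hYA⟩ := exists_prod_one_add_X_sub_one_smul_sub_one_eq ((List.finRange p).map A)
  simp only [List.map_map, Function.comp_def, ← hM, ← Fin.sum_univ_def] at hMY hYA
  have hdeg : ∀ i j, ((M - 1) i j).natDegree ≤ p := fun i j => by
    simpa [hM, Function.comp_def] using natDegree_prod_one_add_X_sub_one_smul_sub_one_apply_le
      ((List.finRange p).map A) i j
  have hcoeff' : ∀ β, ∃ g : k[X], (M - 1).charpoly.coeff β = g.comp (X ^ p) := by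
    rw [← map_one (scalar (Fin N)), charpoly_sub_scalar]
    exact exists_coeff_comp_X_add_one_eq_comp_X_pow hcoeff
  apply taylor_injective (1 : k[X])
  rw [taylor_apply, taylor_apply, ← charpoly_sub_scalar, ← charpoly_sub_scalar, map_one,
    add_sub_cancel_left, hMY, ← hYA]
  exact charpoly_X_sub_one_smul_eq hp Y (hMY ▸ hdeg) (hMY ▸ hcoeff')

/-- Let `A_1,…,A_p` be matrices over `k` (with `p` invertible in `k`) and consider
`M := Π_j (1 + (q−1)A_j)` over `k[q]`. If every coefficient of `charpoly M` is a
polynomial in `q^p`, then `charpoly M = charpoly (1 + p⁻¹(q^p − 1)·A)` where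
`A = Σ_j A_j`. -/
theorem charpoly_ordered_product_eq_of_coeffs_in_qp
    {p : ℕ} (hp1 : 1 ≤ p) {k : Type} [Field k] (hp : (p : k) ≠ 0) {N : ℕ}
    (A : Fin p → Matrix (Fin N) (Fin N) k)
    (M : Matrix (Fin N) (Fin N) (Polynomial k))
    (hM : M = ((List.finRange p).map fun j =>
      (1 + ((X : Polynomial k) - 1) • (A j).map Polynomial.C :
        Matrix (Fin N) (Fin N) (Polynomial k))).prod)
    (hcoeff : ∀ i : ℕ, ∃ g : Polynomial k, M.charpoly.coeff i = g.comp (X ^ p)) :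
    M.charpoly =
      (1 + (Polynomial.C ((p : k)⁻¹) * (X ^ p - 1)) •
        (∑ j, A j).map Polynomial.C).charpoly :=
  charpoly_ordered_product_eq_of_coeffs_in_qp_general hp A M hM hcoeff
end

section
/- Let p ≥ 2 be an integer, k a field containing an element 𝕢 of multiplicative order exactly p (a primitive p-th root of unity), and K = k(q,t,z) the field of rational functions in three variables over k. For a ∈ K and b ∈ K with b ≠ 1 define the 2×2 matrix R(a,b) over K with rows ((ab−1)/(b−1), (a−1)b/(b−1)) and ((a−1)/(b−1), (ab−1)/(b−1)). Let C := (R(q, 𝕢^{p−1}z)·diag(t,t⁻¹)) · (R(q, 𝕢^{p−2}z)·diag(t,t⁻¹)) ⋯ (R(q, 𝕢 z)·diag(t,t⁻¹)) · (R(q, z)·diag(t,t⁻¹)) ∈ Mat_2(K) (the factors taken in descending order of j from p−1 to 0). Let φ : K → K be the k-algebra field embedding determined by q ↦ q^p, t ↦ t^p, z ↦ z^p. If every coefficient of the characteristic polynomial of C lies in the image of φ (the subfield k(q^p, t^p, z^p)), then the characteristic polynomial of C equals the characteristic polynomial of R(q^p, z^p)·diag(t^p, t^{−p}). (This is the isospectrality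 of the p-curvature of the quantum KZ connection for GL_N on the tensor product of two vector representations with the Frobenius twist R(q^p,z^p)·diag(t^p,t^{−p}); the hypothesis on the coefficients is the consequence of periodicity of this family used in the proof.) -/
/-!
Clearing denominators, `R(q,b) · diag(t,t⁻¹) = ((1 - b) t)⁻¹ (A + b B)` with `A` lower and
`B` upper triangular, so `C` is a scalar multiple of `∏_{j=p-1}^{0} (A + 𝕢^j z B)`. The trace
of `∏_{j=p-1}^{0} (A + 𝕢^j X B)` is a polynomial `T(X)` of degree `≤ p`, and `T(𝕢X) = T(X)`:
since `𝕢^p = 1`, substituting `𝕢X` for `X` moves the factor `j = 0` from the right end of the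
product to the left end, which the trace does not see. Hence only the coefficients of `X^0`
and `X^p` survive, namely `tr(A^p)` and `∏_j 𝕢^j · tr(B^p) = (-1)^(p+1) tr(B^p)`, both read
off the diagonals. The determinant is a product of `2 × 2` determinants that telescopes by
`∏_j (1 - 𝕢^j x) = 1 - x^p`, and a `2 × 2` characteristic polynomial is determined by trace
and determinant.
-/

open Matrix MvPolynomial

/-- The R-matrix `R(a,b)` of the quantum KZ connection for two vector representations. -/
noncomputable def Rmat {K : Type} [Field K] (a b : K) : Matrix (Fin 2) (Fin 2) K :=
  !![(a * b - 1) / (b - 1), (a - 1) * b / (b - 1);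
     (a - 1) / (b - 1), (a * b - 1) / (b - 1)]

section DescProd

variable {M : Type*} [Monoid M]

def descProd (f : ℕ → M) (n : ℕ) : M :=
  ((List.range n).reverse.map f).prod

@[simp]
lemma descProd_zero (f : ℕ → M) : descProd f 0 = 1 := rfl

lemma descProd_succ (f : ℕ → M) (n : ℕ) : descProd f (n + 1) = f n * descProd f n := by
  simp [descProd, List.range_succ]

lemma descProd_succ' (f : ℕ → M) (n : ℕ) :
    descProd f (n + 1) = descProd (fun j => f (j + 1)) n * f 0 := by
  simp [descProd, List.range_succ_eq_map, List.map_reverse, List.map_map, Function.comp_def]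

lemma map_descProd {N F : Type*} [Monoid N] [FunLike F M N] [MonoidHomClass F M N] (g : F)
    (f : ℕ → M) (n : ℕ) : g (descProd f n) = descProd (fun j => g (f j)) n := by
  simp [descProd, map_list_prod, List.map_map, Function.comp_def]

lemma descProd_const (a : M) (n : ℕ) : descProd (fun _ => a) n = a ^ n := by
  induction n with
  | zero => simp
  | succ n ih => rw [descProd_succ, ih, pow_succ']

lemma descProd_eq_prod {M : Type*} [CommMonoid M] (f : ℕ → M) (n : ℕ) :
    descProd f n = ∏ j ∈ Finset.range n, f j := by
  induction n with
  | zero => rfl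
  | succ n ih => rw [descProd_succ, ih, Finset.prod_range_succ, mul_comm]

lemma descProd_smul {R : Type*} [CommMonoid R] [MulAction R M] [IsScalarTower R M M]
    [SMulCommClass R M M] (c : ℕ → R) (f : ℕ → M) (n : ℕ) :
    descProd (fun j => c j • f j) n = (∏ j ∈ Finset.range n, c j) • descProd f n := by
  induction n with
  | zero => simp
  | succ n ih =>
    rw [descProd_succ, descProd_succ, ih, Finset.prod_range_succ, smul_mul_smul_comm, mul_comm]

end DescProd

theorem RingHom.map_trace_descProd_of_shift {R n : Type*} [CommSemiring R] [Fintype n]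
    [DecidableEq n] (σ : R →+* R) (f : ℕ → Matrix n n R)
    (hshift : ∀ j, (f j).map σ = f (j + 1)) {p : ℕ} (hper : f p = f 0) :
    σ (trace (descProd f p)) = trace (descProd f p) := by
  rw [AddMonoidHom.map_trace]
  cases p with
  | zero => simp
  | succ p =>
    have hmap : (descProd f (p + 1)).map σ = f 0 * descProd (fun j => f (j + 1)) p := by
      rw [← RingHom.mapMatrix_apply, map_descProd, descProd_succ]
      simp only [RingHom.mapMatrix_apply, hshift, hper]
    rw [hmap, descProd_succ', trace_mul_comm]

namespace Polynomial

section Domain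

variable {R : Type*} [CommRing R] [IsDomain R] {ζ : R} {n : ℕ}

theorem _root_.IsPrimitiveRoot.prod_range_sub_mul (hζ : IsPrimitiveRoot ζ n) (hn : 0 < n)
    (x y : R) : ∏ j ∈ Finset.range n, (x - ζ ^ j * y) = x ^ n - y ^ n := by
  simpa [eval_prod] using congrArg (eval x) (X_pow_sub_C_eq_prod hζ hn (rfl : y ^ n = y ^ n)).symm

theorem _root_.IsPrimitiveRoot.prod_range_pow (hζ : IsPrimitiveRoot ζ n) (hn : 0 < n) :
    ∏ j ∈ Finset.range n, ζ ^ j = (-1) ^ (n + 1) := by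
  have h := hζ.prod_range_sub_mul hn 0 1
  simp only [zero_sub, mul_one, Finset.prod_neg, Finset.card_range, zero_pow hn.ne', one_pow] at h
  calc ∏ j ∈ Finset.range n, ζ ^ j
      = ((-1) ^ n) ^ 2 * ∏ j ∈ Finset.range n, ζ ^ j := by simp [← pow_mul, pow_mul']
    _ = (-1) ^ (n + 1) := by rw [sq, mul_assoc, h, pow_succ]

theorem coeff_eq_zero_of_comp_C_mul_X_eq_self (hζ : IsPrimitiveRoot ζ n) {T : R[X]}
    (hT : T.comp (C ζ * X) = T) {m : ℕ} (hm : ¬ n ∣ m) : T.coeff m = 0 := by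
  have h : T.coeff m * (ζ ^ m - 1) = 0 := by
    rw [mul_sub_one, ← comp_C_mul_X_coeff, hT, sub_self]
  refine (mul_eq_zero.1 h).resolve_right (sub_ne_zero.2 fun hζm => hm ?_)
  exact (hζ.pow_eq_one_iff_dvd m).1 hζm

theorem eq_C_add_C_mul_X_pow_of_comp_C_mul_X_eq_self (hζ : IsPrimitiveRoot ζ n)
    (hn : 0 < n) {T : R[X]} (hT : T.comp (C ζ * X) = T) (hdeg : T.natDegree ≤ n) :
    T = C (T.coeff 0) + C (T.coeff n) * X ^ n := by
  ext m
  simp only [coeff_add, coeff_C, coeff_C_mul_X_pow]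
  rcases Nat.lt_trichotomy m n with hm | rfl | hm
  · rcases Nat.eq_zero_or_pos m with rfl | hm0
    · simp [hn.ne]
    · rw [coeff_eq_zero_of_comp_C_mul_X_eq_self hζ hT (Nat.not_dvd_of_pos_of_lt hm0 hm)]
      simp [hm0.ne', hm.ne]
  · simp [hn.ne']
  · rw [coeff_eq_zero_of_natDegree_lt (hdeg.trans_lt hm)]
    simp [(hn.trans hm).ne', hm.ne']

end Domain

section Semiring

variable {S : Type*} [Semiring S] {g : ℕ → S[X]}

theorem natDegree_descProd_le (hg : ∀ j, (g j).natDegree ≤ 1) (p : ℕ) :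
    (descProd g p).natDegree ≤ p := by
  induction p with
  | zero => simp
  | succ p ih =>
    rw [descProd_succ]
    exact natDegree_mul_le.trans (by linarith [hg p])

theorem coeff_descProd_of_natDegree_le_one (hg : ∀ j, (g j).natDegree ≤ 1) (p : ℕ) :
    (descProd g p).coeff p = descProd (fun j => (g j).coeff 1) p := by
  induction p with
  | zero => simp
  | succ p ih =>
    rw [descProd_succ, descProd_succ, add_comm,
      coeff_mul_add_eq_of_natDegree_le (hg p) (natDegree_descProd_le hg p), ih]

end Semiring

section Matrix

variable {R n : Type*} [CommRing R] [Fintype n]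

theorem coeff_trace (M : Matrix n n R[X]) (m : ℕ) :
    (trace M).coeff m = trace (M.map (coeff · m)) :=
  AddMonoidHom.map_trace (lcoeff R m) M

variable [DecidableEq n]

theorem coeff_matPolyEquiv (M : Matrix n n R[X]) (m : ℕ) :
    (matPolyEquiv M).coeff m = M.map (coeff · m) := by
  ext i j
  exact matPolyEquiv_coeff_apply M m i j

theorem natDegree_matPolyEquiv_le {M : Matrix n n R[X]} {d : ℕ}
    (hM : ∀ i j, (M i j).natDegree ≤ d) : (matPolyEquiv M).natDegree ≤ d :=
  natDegree_le_iff_coeff_eq_zero.2 fun m hm => by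
    ext i j
    simp [coeff_eq_zero_of_natDegree_lt ((hM i j).trans_lt hm)]

variable {f : ℕ → Matrix n n R[X]}

theorem natDegree_trace_descProd_le (hf : ∀ j i k, (f j i k).natDegree ≤ 1) (p : ℕ) :
    (trace (descProd f p)).natDegree ≤ p := by
  refine natDegree_le_iff_coeff_eq_zero.2 fun m hm => ?_
  have hdeg := natDegree_descProd_le (fun j => natDegree_matPolyEquiv_le (hf j)) p
  rw [← map_descProd] at hdeg
  rw [coeff_trace, ← coeff_matPolyEquiv, coeff_eq_zero_of_natDegree_lt (hdeg.trans_lt hm),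
    trace_zero]

theorem coeff_trace_descProd_self (hf : ∀ j i k, (f j i k).natDegree ≤ 1) (p : ℕ) :
    (trace (descProd f p)).coeff p = trace (descProd (fun j => (f j).map (coeff · 1)) p) := by
  have h := coeff_descProd_of_natDegree_le_one (fun j => natDegree_matPolyEquiv_le (hf j)) p
  rw [← map_descProd] at h
  simp only [coeff_matPolyEquiv] at h
  rw [coeff_trace, h]

theorem coeff_zero_trace_descProd (p : ℕ) :
    (trace (descProd f p)).coeff 0 = trace (descProd (fun j => (f j).map (coeff · 0)) p) := by
  rw [coeff_trace]
  exact congrArg trace (map_descProd (constantCoeff (R := R)).mapMatrix f p)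

end Matrix

theorem _root_.IsPrimitiveRoot.trace_descProd_add_smul {R n : Type*} [CommRing R] [IsDomain R]
    [Fintype n] [DecidableEq n] {ζ : R} {p : ℕ} (hζ : IsPrimitiveRoot ζ p) (hp : 0 < p)
    (A B : Matrix n n R) (z : R) :
    trace (descProd (fun j => A + (ζ ^ j * z) • B) p) =
      trace (A ^ p) + (-1) ^ (p + 1) * z ^ p * trace (B ^ p) := by
  set f : ℕ → Matrix n n R[X] := fun j => A.map C + (C (ζ ^ j) * X) • B.map C with hf
  set T := trace (descProd f p)
  have hentry : ∀ j i k, f j i k = C (ζ ^ j * B i k) * X + C (A i k) := fun j i k => by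
    simp only [hf, Matrix.add_apply, map_apply, Matrix.smul_apply, smul_eq_mul, map_mul]
    ring
  have hdeg : ∀ j i k, (f j i k).natDegree ≤ 1 := fun j i k => by
    simpa only [hentry] using natDegree_linear_le
  have hfix : T.comp (C ζ * X) = T := by
    refine (compRingHom (C ζ * X)).map_trace_descProd_of_shift f (fun j => ?_) ?_
    · ext i k : 1
      simp only [map_apply, hentry, coe_compRingHom, add_comp, mul_comp, C_comp, X_comp, pow_succ,
        map_mul]
      ring
    · simp only [hf, hζ.pow_eq_one, pow_zero, C_1, one_mul]
  have hT0 : T.coeff 0 = trace (A ^ p) := by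
    rw [coeff_zero_trace_descProd, ← descProd_const]
    congr
    ext
    simp [hentry]
  have hTp : T.coeff p = (-1) ^ (p + 1) * trace (B ^ p) := by
    rw [coeff_trace_descProd_self hdeg, ← hζ.prod_range_pow hp, ← smul_eq_mul, ← trace_smul,
      ← descProd_const, ← descProd_smul]
    congr
    ext
    simp [hentry, -map_mul, -map_pow]
  have heval : T.eval z = trace (descProd (fun j => A + (ζ ^ j * z) • B) p) := by
    rw [← coe_evalRingHom, AddMonoidHom.map_trace, ← RingHom.mapMatrix_apply, map_descProd]
    congr
    ext
    simp only [RingHom.mapMatrix_apply, coe_evalRingHom, map_apply, hentry, eval_add, eval_mul,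
      eval_C, eval_X, Matrix.add_apply, Matrix.smul_apply, smul_eq_mul]
    ring
  rw [← heval, eq_C_add_C_mul_X_pow_of_comp_C_mul_X_eq_self hζ hp hfix
    (natDegree_trace_descProd_le hdeg p), hT0, hTp]
  simp only [eval_add, eval_mul, eval_C, eval_pow, eval_X]
  ring

end Polynomial

theorem IsPrimitiveRoot.pow_mul_ne_one_of_pow_ne_one {M : Type*} [CommMonoid M] {ζ z : M}
    {p : ℕ} (hζ : IsPrimitiveRoot ζ p) (hz : z ^ p ≠ 1) (j : ℕ) : ζ ^ j * z ≠ 1 := by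
  intro h
  apply hz
  rw [← one_pow p, ← h, mul_pow, ← pow_mul, mul_comm j, pow_mul, hζ.pow_eq_one, one_pow,
    one_mul]

theorem Matrix.trace_pow_fin_two_of_apply_one_zero {R : Type*} [CommRing R]
    (M : Matrix (Fin 2) (Fin 2) R) (h : M 1 0 = 0) (n : ℕ) :
    trace (M ^ n) = M 0 0 ^ n + M 1 1 ^ n := by
  have key : (M ^ n) 1 0 = 0 ∧ (M ^ n) 0 0 = M 0 0 ^ n ∧ (M ^ n) 1 1 = M 1 1 ^ n := by
    induction n with
    | zero => simp
    | succ n ih => simp [pow_succ, mul_apply, Fin.sum_univ_two, ih.1, ih.2.1, ih.2.2, h]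
  rw [trace_fin_two, key.2.1, key.2.2]

theorem Matrix.trace_pow_fin_two_of_apply_zero_one {R : Type*} [CommRing R]
    (M : Matrix (Fin 2) (Fin 2) R) (h : M 0 1 = 0) (n : ℕ) :
    trace (M ^ n) = M 0 0 ^ n + M 1 1 ^ n := by
  rw [← trace_transpose, transpose_pow, trace_pow_fin_two_of_apply_one_zero _ h]
  rfl

section Rmat

variable {K : Type} [Field K]

theorem Rmat_mul_diagonal (a b s : K) :
    Rmat a b * diagonal ![s, s⁻¹] =
      !![(a * b - 1) / (b - 1) * s, (a - 1) * b / (b - 1) * s⁻¹;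
         (a - 1) / (b - 1) * s, (a * b - 1) / (b - 1) * s⁻¹] := by
  ext i j
  fin_cases i <;> fin_cases j <;> simp [Rmat, mul_diagonal]

theorem trace_Rmat_mul_diagonal (a b s : K) :
    trace (Rmat a b * diagonal ![s, s⁻¹]) = (a * b - 1) / (b - 1) * (s + s⁻¹) := by
  rw [Rmat_mul_diagonal, trace_fin_two_of]
  ring

theorem det_Rmat_mul_diagonal (a : K) {b s : K} (hb : b ≠ 1) (hs : s ≠ 0) :
    det (Rmat a b * diagonal ![s, s⁻¹]) = (a ^ 2 * b - 1) / (b - 1) := by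
  have hb' : b - 1 ≠ 0 := sub_ne_zero.2 hb
  rw [Rmat_mul_diagonal, det_fin_two_of]
  field_simp
  ring

theorem Rmat_mul_diagonal_eq_smul (a : K) {b s : K} (hb : b ≠ 1) :
    Rmat a b * diagonal ![s, s⁻¹] =
      ((1 - b) * s)⁻¹ •
        (!![s ^ 2, 0; (1 - a) * s ^ 2, 1] + b • !![-a * s ^ 2, 1 - a; 0, -a]) := by
  have hb' : 1 - b ≠ 0 := sub_ne_zero.2 hb.symm
  rw [Rmat_mul_diagonal]
  ext i j
  fin_cases i <;> fin_cases j <;>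
    simp only [of_apply, cons_val', cons_val_zero, cons_val_one, cons_val_fin_one, smul_of,
      smul_cons, smul_eq_mul, smul_empty, of_add_of, add_cons, head_cons, tail_cons,
      empty_add_empty, Matrix.smul_apply, Fin.zero_eta, Fin.mk_one, _root_.mul_inv_rev, neg_mul,
      mul_neg, mul_zero, zero_add, add_zero] <;>
    field_simp <;> ring

variable {ζ : K} {p : ℕ}

theorem trace_descProd_Rmat_mul_diagonal (hζ : IsPrimitiveRoot ζ p) (hp : 0 < p) (q : K)
    {t z : K} (ht : t ≠ 0) (hz : z ^ p ≠ 1) :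
    trace (descProd (fun j => Rmat q (ζ ^ j * z) * diagonal ![t, t⁻¹]) p) =
      (q ^ p * z ^ p - 1) / (z ^ p - 1) * (t ^ p + (t ^ p)⁻¹) := by
  have hb : ∀ j, ζ ^ j * z ≠ 1 := hζ.pow_mul_ne_one_of_pow_ne_one hz
  have hsign : (-1 : K) ^ (p + 1) * (-1) ^ p = -1 := by
    rw [← pow_add, show p + 1 + p = 2 * p + 1 by ring, pow_succ, pow_mul]
    simp
  simp_rw [Rmat_mul_diagonal_eq_smul q (hb _)]
  rw [descProd_smul, trace_smul, hζ.trace_descProd_add_smul hp,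
    trace_pow_fin_two_of_apply_zero_one _ rfl, trace_pow_fin_two_of_apply_one_zero _ rfl,
    Finset.prod_inv_distrib, Finset.prod_mul_distrib, Finset.prod_const, Finset.card_range]
  have hprod := hζ.prod_range_sub_mul hp 1 z
  simp only [one_pow] at hprod
  rw [hprod]
  simp only [of_apply, cons_val', cons_val_zero, cons_val_one, empty_val', cons_val_fin_one,
    smul_eq_mul]
  have hz'' : 1 - z ^ p ≠ 0 := sub_ne_zero.2 hz.symm
  rw [mul_pow, neg_pow q]
  field_simp
  linear_combination z ^ p * q ^ p * ((t ^ 2) ^ p + 1) * (z ^ p - 1) * hsign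

theorem det_descProd_Rmat_mul_diagonal (hζ : IsPrimitiveRoot ζ p) (hp : 0 < p) (q : K)
    {t z : K} (ht : t ≠ 0) (hz : z ^ p ≠ 1) :
    det (descProd (fun j => Rmat q (ζ ^ j * z) * diagonal ![t, t⁻¹]) p) =
      (q ^ (2 * p) * z ^ p - 1) / (z ^ p - 1) := by
  have hfactor : ∀ j, det (Rmat q (ζ ^ j * z) * diagonal ![t, t⁻¹]) =
      (1 - ζ ^ j * (q ^ 2 * z)) / (1 - ζ ^ j * z) := fun j => by
    rw [det_Rmat_mul_diagonal q (hζ.pow_mul_ne_one_of_pow_ne_one hz j) ht, ← neg_div_neg_eq]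
    congr 1 <;> ring
  rw [← coe_detMonoidHom, map_descProd, descProd_eq_prod]
  simp only [coe_detMonoidHom, hfactor]
  rw [Finset.prod_div_distrib, hζ.prod_range_sub_mul hp, hζ.prod_range_sub_mul hp,
    ← neg_div_neg_eq]
  congr 1 <;> ring

theorem charpoly_descProd_Rmat_mul_diagonal (hζ : IsPrimitiveRoot ζ p) (hp : 0 < p) (q : K)
    {t z : K} (ht : t ≠ 0) (hz : z ^ p ≠ 1) :
    charpoly (descProd (fun j => Rmat q (ζ ^ j * z) * diagonal ![t, t⁻¹]) p) =
      charpoly (Rmat (q ^ p) (z ^ p) * diagonal ![t ^ p, (t ^ p)⁻¹]) := by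
  rw [charpoly_fin_two, charpoly_fin_two, trace_descProd_Rmat_mul_diagonal hζ hp q ht hz,
    det_descProd_Rmat_mul_diagonal hζ hp q ht hz, trace_Rmat_mul_diagonal,
    det_Rmat_mul_diagonal _ hz (pow_ne_zero p ht), ← pow_mul, mul_comm p 2]

end Rmat

theorem qKZ_pcurvature_isospectral_general
    {p : ℕ} (hp2 : 2 ≤ p) {k : Type} [Field k] (𝕢 : k) (h𝕢 : orderOf 𝕢 = p)
    (K : Type) [Field K] [Algebra k K]
    [Algebra (MvPolynomial (Fin 3) k) K]
    [IsFractionRing (MvPolynomial (Fin 3) k) K]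
    (q t z : K)
    (ht : t = algebraMap (MvPolynomial (Fin 3) k) K (X 1))
    (hz : z = algebraMap (MvPolynomial (Fin 3) k) K (X 2))
    (C : Matrix (Fin 2) (Fin 2) K)
    (hC : C = ((List.range p).reverse.map fun j =>
      Rmat q ((algebraMap k K 𝕢) ^ j * z) * Matrix.diagonal ![t, t⁻¹]).prod) :
    C.charpoly =
      (Rmat (q ^ p) (z ^ p) * Matrix.diagonal ![t ^ p, (t ^ p)⁻¹]).charpoly := by
  have hp : 0 < p := by omega
  have hinj := IsFractionRing.injective (MvPolynomial (Fin 3) k) K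
  have hζ : IsPrimitiveRoot (algebraMap k K 𝕢) p :=
    (h𝕢 ▸ IsPrimitiveRoot.orderOf 𝕢).map_of_injective (algebraMap k K).injective
  have ht0 : t ≠ 0 := ht ▸ (map_ne_zero_iff _ hinj).2 (X_ne_zero 1)
  have hzp : z ^ p ≠ 1 := by
    rw [hz, ← map_pow, ← map_one (algebraMap (MvPolynomial (Fin 3) k) K), hinj.ne_iff]
    intro h
    simpa [hp.ne'] using congrArg constantCoeff h
  rw [hC]
  exact charpoly_descProd_Rmat_mul_diagonal hζ hp q ht0 hzp

/-- Isospectrality of the `p`-curvature of the quantum KZ connection: over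
`K = k(q,t,z)`, with `𝕢 ∈ k` a primitive `p`-th root of unity, let
`C = Π_{j=p−1}^{0} R(q,𝕢^j z)·diag(t,t⁻¹)`. If every coefficient of `charpoly C` lies
in the image of the embedding `φ : q ↦ q^p, t ↦ t^p, z ↦ z^p`, then
`charpoly C = charpoly (R(q^p,z^p)·diag(t^p,t^{−p}))`. -/
theorem qKZ_pcurvature_isospectral
    {p : ℕ} (hp2 : 2 ≤ p) {k : Type} [Field k] (𝕢 : k) (h𝕢 : orderOf 𝕢 = p)
    (K : Type) [Field K] [Algebra k K]
    [Algebra (MvPolynomial (Fin 3) k) K] [IsScalarTower k (MvPolynomial (Fin 3) k) K]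
    [IsFractionRing (MvPolynomial (Fin 3) k) K]
    (q t z : K)
    (hq : q = algebraMap (MvPolynomial (Fin 3) k) K (X 0))
    (ht : t = algebraMap (MvPolynomial (Fin 3) k) K (X 1))
    (hz : z = algebraMap (MvPolynomial (Fin 3) k) K (X 2))
    (C : Matrix (Fin 2) (Fin 2) K)
    (hC : C = ((List.range p).reverse.map fun j =>
      Rmat q ((algebraMap k K 𝕢) ^ j * z) * Matrix.diagonal ![t, t⁻¹]).prod)
    (φ : K →ₐ[k] K) (hφq : φ q = q ^ p) (hφt : φ t = t ^ p) (hφz : φ z = z ^ p)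
    (hcoeff : ∀ i : ℕ, C.charpoly.coeff i ∈ Set.range φ) :
    C.charpoly =
      (Rmat (q ^ p) (z ^ p) * Matrix.diagonal ![t ^ p, (t ^ p)⁻¹]).charpoly :=
  qKZ_pcurvature_isospectral_general hp2 𝕢 h𝕢 K q t z ht hz C hC
end

section
/- Let k be a field of characteristic 3, N ∈ ℕ, and a ∈ Mat_N(k[x]) a matrix of polynomials. Define the operator ∇ on N-tuples v ∈ (k[x])^N by ∇v = v′ + a·v, where ′ is the entrywise polynomial derivative and · matrix–vector multiplication. Then ∇∘∇∘∇ is the k[x]-linear operator of multiplication by the matrix a³ + [a′, a] + a″ = a³ + a′·a − a·a′ + a″, where a′ and a″ denote the entrywise first and second derivatives of a: for every v ∈ (k[x])^N, ∇(∇(∇v)) = (a·a·a + a′·a − a·a′ + a″)·v. (That is, the p-curvature of the connection ∇ = d + a on the affine line for p = 3 is C = a³ + [a′,a] + a″.) -/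
open Matrix Polynomial

lemma dthree {k : Type} [Field k] [CharP k 3] (p : Polynomial k) :
    derivative (derivative (derivative p)) = 0 := by
  ext n
  simp only [coeff_derivative, coeff_zero]
  have h : (3 : ℕ) ∣ (n+1)*(n+2)*(n+3) := by
    rcases (show 3 ∣ n+1 ∨ 3 ∣ n+2 ∨ 3 ∣ n+3 by omega) with h|h|h
    · exact Dvd.dvd.mul_right (h.mul_right _) _
    · exact Dvd.dvd.mul_right (Dvd.dvd.mul_left h _) _
    · exact Dvd.dvd.mul_left h _
  have h0 : (((n+1)*(n+2)*(n+3) : ℕ) : k) = 0 := (CharP.cast_eq_zero_iff k 3 _).mpr h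
  push_cast at h0
  have key : p.coeff (n+1+1+1) * ((n:k)+1+1+1) * ((n:k)+1+1) * ((n:k)+1) = 0 := by
    rw [show p.coeff (n+1+1+1) * ((n:k)+1+1+1) * ((n:k)+1+1) * ((n:k)+1)
      = p.coeff (n+1+1+1) * (((n:k)+1) * ((n:k)+2) * ((n:k)+3)) by ring, h0, mul_zero]
  convert key using 2 <;> (push_cast; ring)

/-- `p`-curvature on the affine line for `p = 3`: if `char k = 3` and
`∇v = v′ + a·v` on `(k[x])^N`, then `∇³` is multiplication by
`a³ + a′·a − a·a′ + a″`. -/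
theorem pcurvature_char_three
    {k : Type} [Field k] [CharP k 3] {N : ℕ}
    (a : Matrix (Fin N) (Fin N) (Polynomial k))
    (D : (Fin N → Polynomial k) → (Fin N → Polynomial k))
    (hD : ∀ v, D v = fun i => derivative (v i) + (a *ᵥ v) i) :
    ∀ v : Fin N → Polynomial k,
      D (D (D v)) =
        (a * a * a + a.map (⇑derivative) * a - a * a.map (⇑derivative) +
          a.map (fun q => derivative (derivative q))) *ᵥ v := by
  intro v
  set δ : (Fin N → Polynomial k) → (Fin N → Polynomial k) :=
    fun w i => derivative (w i) with hδdef
  have hDw : ∀ w, D w = δ w + a *ᵥ w := by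
    intro w; rw [hD]; rfl
  have hδadd : ∀ u w, δ (u + w) = δ u + δ w := by
    intro u w; funext i; simp [hδdef]
  have hδmul : ∀ (b : Matrix (Fin N) (Fin N) (Polynomial k)) w,
      δ (b *ᵥ w) = b.map (⇑derivative) *ᵥ w + b *ᵥ δ w := by
    intro b w; funext i
    simp [hδdef, mulVec, dotProduct, derivative_mul, Finset.sum_add_distrib,
      Matrix.map_apply, Pi.add_apply]
  have hδδδ : δ (δ (δ v)) = 0 := by
    funext i; simp [hδdef, dthree]
  have h3 : ∀ u : Fin N → Polynomial k, u + u + u = 0 := by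
    intro u; funext i
    have h30 : (3 : Polynomial k) = 0 := CharP.cast_eq_zero (Polynomial k) 3
    have : u i + u i + u i = 3 * u i := by ring
    rw [Pi.add_apply, Pi.add_apply, Pi.zero_apply, this, h30, zero_mul]
  have hmap2 : a.map (fun q => derivative (derivative q))
      = (a.map (⇑derivative)).map (⇑derivative) := by
    ext i j; simp [Matrix.map_apply]
  simp only [hDw, hδadd, hδmul, Matrix.mulVec_add, Matrix.add_mulVec,
    Matrix.sub_mulVec, hδδδ, hmap2, ← Matrix.mulVec_mulVec]
  linear_combination h3 (a.map (⇑derivative) *ᵥ δ v) + h3 (a *ᵥ δ (δ v))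
    + h3 (a *ᵥ (a *ᵥ δ v)) + h3 (a *ᵥ (a.map (⇑derivative) *ᵥ v))
end
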